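/- arXiv:2211.14546 — 9 statements merged into one kernel-verified Lean document; each statement's English description precedes it below -/
import Mathlib

section
/- Let X be a δ-hyperbolic geodesic space, ℓ a bi-infinite geodesic in X, and x,y ∈ X with K_x = d(x,ℓ), K_y = d(y,ℓ), d = d(x,y). Let x₁,y₁ ∈ ℓ be projections of x and y onto ℓ (points realizing the distances), and [x₁,y₁] the segment of ℓ between them. If there exists z ∈ [x,y] with d(z,[x₁,y₁]) ≤ 2δ, then d ≥ K_x + K_y − 4δ; if every z ∈ [x,y] satisfies d(z,[x₁,y₁]) > 2δ, then d ≤ K_x + K_y + 4δ. -/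
open Metric Set

/-- `g` parametrizes a geodesic segment from `x` to `y` (unit speed on `[0, dist x y]`). -/
def IsGeodParam {X : Type*} [MetricSpace X] (g : ℝ → X) (x y : X) : Prop :=
  g 0 = x ∧ g (dist x y) = y ∧
    ∀ s ∈ Set.Icc (0:ℝ) (dist x y), ∀ t ∈ Set.Icc (0:ℝ) (dist x y),
      dist (g s) (g t) = |s - t|

/-- The geodesic segment as a subset of `X`. -/
def segSet {X : Type*} [MetricSpace X] (g : ℝ → X) (x y : X) : Set X :=
  g '' Set.Icc 0 (dist x y)

/-- `X` is δ-hyperbolic: every geodesic triangle is δ-thin. -/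
def DeltaThin (X : Type*) [MetricSpace X] (δ : ℝ) : Prop :=
  ∀ (x y z : X) (gxy gyz gxz : ℝ → X),
    IsGeodParam gxy x y → IsGeodParam gyz y z → IsGeodParam gxz x z →
    ∀ p ∈ segSet gxy x y, ∃ q ∈ segSet gyz y z ∪ segSet gxz x z, dist p q ≤ δ

/-- `ℓ` is a bi-infinite geodesic (an isometric embedding of `ℝ`). -/
def IsGeodLine {X : Type*} [MetricSpace X] (ℓ : ℝ → X) : Prop :=
  ∀ s t : ℝ, dist (ℓ s) (ℓ t) = |s - t|

lemma seg_dist_add {X : Type*} [MetricSpace X] {h : ℝ → X} {p q : X}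
    (hh : IsGeodParam h p q) {w : X} (hw : w ∈ segSet h p q) :
    dist p w + dist w q = dist p q := by
  obtain ⟨t, ht, rfl⟩ := hw
  have h1 : dist p (h t) = t := by
    rw [← hh.1, hh.2.2 0 ⟨le_refl 0, dist_nonneg⟩ t ht]
    rw [abs_of_nonpos (by linarith [ht.1])]; ring
  have h2 : dist (h t) q = dist p q - t := by
    have h3 := hh.2.2 t ht (dist p q) ⟨dist_nonneg, le_refl _⟩
    rw [hh.2.1] at h3
    rw [h3, abs_of_nonpos (by linarith [ht.2])]; ring
  rw [h1, h2]; ring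

lemma seg_dist_left {X : Type*} [MetricSpace X] {h : ℝ → X} {p q : X}
    (hh : IsGeodParam h p q) {w : X} (hw : w ∈ segSet h p q) :
    dist p w ≤ dist p q := by
  have := seg_dist_add hh hw
  have := dist_nonneg (x := w) (y := q)
  linarith

lemma seg_dist_right {X : Type*} [MetricSpace X] {h : ℝ → X} {p q : X}
    (hh : IsGeodParam h p q) {w : X} (hw : w ∈ segSet h p q) :
    dist w q ≤ dist p q := by
  have := seg_dist_add hh hw
  have := dist_nonneg (x := p) (y := w)
  linarith

/-- subsegment of a geodesic line is a geodesic. -/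
lemma line_geod {X : Type*} [MetricSpace X] {ℓ : ℝ → X} (hℓ : IsGeodLine ℓ) (s₁ t₁ : ℝ) :
    IsGeodParam (fun u => ℓ (s₁ + (if s₁ ≤ t₁ then (1:ℝ) else -1) * u)) (ℓ s₁) (ℓ t₁) := by
  set e : ℝ := if s₁ ≤ t₁ then (1:ℝ) else -1 with he
  have hd : dist (ℓ s₁) (ℓ t₁) = |s₁ - t₁| := hℓ s₁ t₁
  refine ⟨by simp, ?_, ?_⟩
  · rw [hd]
    by_cases hst : s₁ ≤ t₁
    · simp only [he, if_pos hst]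
      rw [abs_of_nonpos (by linarith)]
      norm_num
    · simp only [he, if_neg hst]
      rw [abs_of_nonneg (by linarith [lt_of_not_ge hst])]
      norm_num
  · intro s _ t _
    have : dist (ℓ (s₁ + e * s)) (ℓ (s₁ + e * t)) = |(s₁ + e * s) - (s₁ + e * t)| := hℓ _ _
    rw [this]
    have : (s₁ + e * s) - (s₁ + e * t) = e * (s - t) := by ring
    rw [this, abs_mul]
    have : |e| = 1 := by
      by_cases hst : s₁ ≤ t₁ <;> simp [he, hst]
    rw [this, one_mul]

lemma line_seg_subset {X : Type*} [MetricSpace X] {ℓ : ℝ → X} (hℓ : IsGeodLine ℓ) (s₁ t₁ : ℝ) :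
    segSet (fun u => ℓ (s₁ + (if s₁ ≤ t₁ then (1:ℝ) else -1) * u)) (ℓ s₁) (ℓ t₁)
      ⊆ ℓ '' Set.uIcc s₁ t₁ := by
  rintro w ⟨u, hu, rfl⟩
  have hd : dist (ℓ s₁) (ℓ t₁) = |s₁ - t₁| := hℓ s₁ t₁
  rw [hd] at hu
  refine ⟨s₁ + (if s₁ ≤ t₁ then (1:ℝ) else -1) * u, ?_, rfl⟩
  rw [Set.uIcc, Set.mem_Icc]
  by_cases hst : s₁ ≤ t₁
  · rw [if_pos hst]
    rw [abs_of_nonpos (by linarith)] at hu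
    constructor
    · simp only [inf_le_iff]; left; linarith [hu.1]
    · simp only [le_sup_iff]; right; linarith [hu.2]
  · rw [if_neg hst]
    have hst' := lt_of_not_ge hst
    rw [abs_of_nonneg (by linarith)] at hu
    constructor
    · simp only [inf_le_iff]; right; linarith [hu.2]
    · simp only [le_sup_iff]; left; linarith [hu.1]

/-- Let `ℓ` be a bi-infinite geodesic in a δ-hyperbolic geodesic space, `x, y ∈ X`,
`x₁ = ℓ s₁`, `y₁ = ℓ t₁` projections of `x, y` on `ℓ`, and `[x₁,y₁]` the subsegment
of `ℓ` between them. If some `z ∈ [x,y]` has `d(z,[x₁,y₁]) ≤ 2δ` then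
`d(x,y) ≥ K_x + K_y − 4δ`; if every `z ∈ [x,y]` has `d(z,[x₁,y₁]) > 2δ` then
`d(x,y) ≤ K_x + K_y + 4δ`. -/
theorem stmt_3 {X : Type*} [MetricSpace X] [ProperSpace X] (δ : ℝ) (hδ : 0 ≤ δ)
    (hyp : DeltaThin X δ)
    (hgeo : ∀ p q : X, ∃ g : ℝ → X, IsGeodParam g p q)
    (ℓ : ℝ → X) (hℓ : IsGeodLine ℓ) (x y : X) (s₁ t₁ : ℝ)
    (hx₁ : dist x (ℓ s₁) = Metric.infDist x (Set.range ℓ))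
    (hy₁ : dist y (ℓ t₁) = Metric.infDist y (Set.range ℓ))
    (g : ℝ → X) (hg : IsGeodParam g x y) :
    ((∃ z ∈ segSet g x y, Metric.infDist z (ℓ '' Set.uIcc s₁ t₁) ≤ 2 * δ) →
      Metric.infDist x (Set.range ℓ) + Metric.infDist y (Set.range ℓ) - 4 * δ ≤ dist x y) ∧
    ((∀ z ∈ segSet g x y, 2 * δ < Metric.infDist z (ℓ '' Set.uIcc s₁ t₁)) →
      dist x y ≤ Metric.infDist x (Set.range ℓ) + Metric.infDist y (Set.range ℓ) + 4 * δ) := by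
  have hne : (ℓ '' Set.uIcc s₁ t₁).Nonempty := ⟨ℓ s₁, s₁, Set.left_mem_uIcc, rfl⟩
  constructor
  · rintro ⟨z, hz, hzle⟩
    rw [← hx₁, ← hy₁]
    have hsum := seg_dist_add hg hz
    -- ε argument
    have key : ∀ ε : ℝ, 0 < ε →
        dist x (ℓ s₁) + dist y (ℓ t₁) - 4 * δ ≤ dist x y + ε := by
      intro ε hε
      have hlt : Metric.infDist z (ℓ '' Set.uIcc s₁ t₁) < 2 * δ + ε / 2 := by linarith
      obtain ⟨w, hw, hwd⟩ := (Metric.infDist_lt_iff hne).mp hlt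
      obtain ⟨r, _, rfl⟩ := hw
      have h1 : dist x (ℓ s₁) ≤ dist x z + dist z (ℓ r) := by
        rw [hx₁]
        calc Metric.infDist x (Set.range ℓ) ≤ dist x (ℓ r) :=
              Metric.infDist_le_dist_of_mem ⟨r, rfl⟩
          _ ≤ dist x z + dist z (ℓ r) := dist_triangle _ _ _
      have h2 : dist y (ℓ t₁) ≤ dist z y + dist z (ℓ r) := by
        rw [hy₁]
        calc Metric.infDist y (Set.range ℓ) ≤ dist y (ℓ r) :=
              Metric.infDist_le_dist_of_mem ⟨r, rfl⟩
          _ ≤ dist y z + dist z (ℓ r) := dist_triangle _ _ _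
          _ = dist z y + dist z (ℓ r) := by rw [dist_comm]
      linarith
    by_contra hcon
    push_neg at hcon
    have := key ((dist x (ℓ s₁) + dist y (ℓ t₁) - 4 * δ - dist x y) / 2) (by linarith)
    linarith
  · intro hsep
    rw [← hx₁, ← hy₁]
    obtain ⟨g₂, hg₂⟩ := hgeo x (ℓ s₁)
    obtain ⟨g₁, hg₁⟩ := hgeo y (ℓ s₁)
    obtain ⟨g₃, hg₃⟩ := hgeo y (ℓ t₁)
    set Sx : Set X := segSet g₂ x (ℓ s₁) with hSx
    set Sy : Set X := segSet g₃ y (ℓ t₁) with hSy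
    have hSxne : Sx.Nonempty := ⟨x, 0, ⟨le_refl 0, dist_nonneg⟩, hg₂.1⟩
    have hSyne : Sy.Nonempty := ⟨y, 0, ⟨le_refl 0, dist_nonneg⟩, hg₃.1⟩
    set D := dist x y with hD
    have hD0 : 0 ≤ D := dist_nonneg
    -- the dichotomy
    have dich : ∀ t ∈ Set.Icc (0:ℝ) D, Metric.infDist (g t) Sx ≤ 2 * δ ∨
        Metric.infDist (g t) Sy ≤ 2 * δ := by
      intro t ht
      have hzmem : g t ∈ segSet g x y := ⟨t, ht, rfl⟩
      have hz := hsep (g t) hzmem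
      obtain ⟨q, hq, hqd⟩ := hyp x y (ℓ s₁) g g₁ g₂ hg hg₁ hg₂ (g t) hzmem
      rcases hq with hq | hq
      · -- q on [y, x₁]; push further
        obtain ⟨r, hr, hrd⟩ := hyp y (ℓ s₁) (ℓ t₁) g₁
          (fun u => ℓ (s₁ + (if s₁ ≤ t₁ then (1:ℝ) else -1) * u)) g₃
          hg₁ (line_geod hℓ s₁ t₁) hg₃ q hq
        rcases hr with hr | hr
        · exfalso
          have hrmem : r ∈ ℓ '' Set.uIcc s₁ t₁ := line_seg_subset hℓ s₁ t₁ hr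
          have : Metric.infDist (g t) (ℓ '' Set.uIcc s₁ t₁) ≤ dist (g t) r :=
            Metric.infDist_le_dist_of_mem hrmem
          have htri : dist (g t) r ≤ dist (g t) q + dist q r := dist_triangle _ _ _
          linarith
        · right
          calc Metric.infDist (g t) Sy ≤ dist (g t) r := Metric.infDist_le_dist_of_mem hr
            _ ≤ dist (g t) q + dist q r := dist_triangle _ _ _
            _ ≤ 2 * δ := by linarith
      · left
        calc Metric.infDist (g t) Sx ≤ dist (g t) q := Metric.infDist_le_dist_of_mem hq
          _ ≤ 2 * δ := by linarith
    -- clamp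
    set c : ℝ → ℝ := fun t => min (max t 0) D with hc
    have hcmem : ∀ t, c t ∈ Set.Icc (0:ℝ) D := by
      intro t
      constructor
      · exact le_min (le_max_right t 0) hD0
      · exact min_le_right _ _
    have hcid : ∀ t ∈ Set.Icc (0:ℝ) D, c t = t := by
      intro t ht
      simp only [hc]
      rw [max_eq_left ht.1, min_eq_left ht.2]
    have hclip : ∀ a b : ℝ, |c a - c b| ≤ |a - b| := by
      intro a b
      simp only [hc]
      calc |min (max a 0) D - min (max b 0) D|
          ≤ max |max a 0 - max b 0| |D - D| := abs_min_sub_min_le_max _ _ _ _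
        _ ≤ |a - b| := by
            apply max_le
            · exact abs_max_sub_max_le_abs a b 0
            · simp [abs_nonneg]
    have hgc_lip : ∀ a b : ℝ, dist (g (c a)) (g (c b)) ≤ |a - b| := by
      intro a b
      rw [hg.2.2 (c a) (hcmem a) (c b) (hcmem b)]
      exact hclip a b
    have hcont : ∀ S : Set X, Continuous fun t => Metric.infDist (g (c t)) S := by
      intro S
      have : LipschitzWith 1 fun t => Metric.infDist (g (c t)) S := by
        apply LipschitzWith.of_dist_le_mul
        intro a b
        calc dist (Metric.infDist (g (c a)) S) (Metric.infDist (g (c b)) S)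
            ≤ dist (g (c a)) (g (c b)) := by
              rw [Real.dist_eq, abs_sub_le_iff]
              constructor
              · linarith [Metric.infDist_le_infDist_add_dist (x := g (c a)) (y := g (c b)) (s := S)]
              · linarith [Metric.infDist_le_infDist_add_dist (x := g (c b)) (y := g (c a)) (s := S),
                  dist_comm (g (c a)) (g (c b))]
          _ ≤ |a - b| := hgc_lip a b
          _ = 1 * dist a b := by rw [one_mul, Real.dist_eq]
      exact this.continuous
    -- connectedness
    set U : Set ℝ := (fun t => Metric.infDist (g (c t)) Sx) ⁻¹' Set.Iic (2 * δ) with hU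
    set V : Set ℝ := (fun t => Metric.infDist (g (c t)) Sy) ⁻¹' Set.Iic (2 * δ) with hV
    have hUc : IsClosed U := IsClosed.preimage (hcont Sx) isClosed_Iic
    have hVc : IsClosed V := IsClosed.preimage (hcont Sy) isClosed_Iic
    have hcover : Set.Icc (0:ℝ) D ⊆ U ∪ V := by
      intro t ht
      rcases dich t ht with h | h
      · left; simp only [hU, Set.mem_preimage, Set.mem_Iic, hcid t ht]; exact h
      · right; simp only [hV, Set.mem_preimage, Set.mem_Iic, hcid t ht]; exact h
    have h0U : (Set.Icc (0:ℝ) D ∩ U).Nonempty := by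
      refine ⟨0, ⟨le_refl 0, hD0⟩, ?_⟩
      simp only [hU, Set.mem_preimage, Set.mem_Iic, hcid 0 ⟨le_refl 0, hD0⟩]
      have : Metric.infDist (g 0) Sx = 0 := by
        rw [hg.1]
        exact Metric.infDist_zero_of_mem ⟨0, ⟨le_refl 0, dist_nonneg⟩, hg₂.1⟩
      rw [this]; linarith
    have hDV : (Set.Icc (0:ℝ) D ∩ V).Nonempty := by
      refine ⟨D, ⟨hD0, le_refl D⟩, ?_⟩
      simp only [hV, Set.mem_preimage, Set.mem_Iic, hcid D ⟨hD0, le_refl D⟩]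
      have : Metric.infDist (g D) Sy = 0 := by
        rw [hg.2.1]
        exact Metric.infDist_zero_of_mem ⟨0, ⟨le_refl 0, dist_nonneg⟩, hg₃.1⟩
      rw [this]; linarith
    obtain ⟨t, hticc, htU, htV⟩ :=
      isPreconnected_closed_iff.mp isPreconnected_Icc U V hUc hVc hcover h0U hDV
    simp only [hU, hV, Set.mem_preimage, Set.mem_Iic, hcid t hticc] at htU htV
    -- conclude via ε-argument
    have key : ∀ ε : ℝ, 0 < ε →
        dist x y ≤ dist x (ℓ s₁) + dist y (ℓ t₁) + 4 * δ + ε := by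
      intro ε hε
      have hxlt : Metric.infDist (g t) Sx < 2 * δ + ε / 2 := by linarith
      have hylt : Metric.infDist (g t) Sy < 2 * δ + ε / 2 := by linarith
      obtain ⟨p, hp, hpd⟩ := (Metric.infDist_lt_iff hSxne).mp hxlt
      obtain ⟨q, hq, hqd⟩ := (Metric.infDist_lt_iff hSyne).mp hylt
      have hxp : dist x p ≤ dist x (ℓ s₁) := seg_dist_left hg₂ hp
      have hyq : dist y q ≤ dist y (ℓ t₁) := seg_dist_left hg₃ hq
      calc dist x y ≤ dist x (g t) + dist (g t) y := dist_triangle _ _ _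
        _ ≤ (dist x p + dist p (g t)) + (dist (g t) q + dist q y) := by
            gcongr <;> [exact dist_triangle _ _ _; exact dist_triangle _ _ _]
        _ ≤ dist x (ℓ s₁) + dist y (ℓ t₁) + 4 * δ + ε := by
            rw [dist_comm p (g t), dist_comm q y]
            linarith
    by_contra hcon
    push_neg at hcon
    rw [hD] at hcon
    have := key ((dist x y - (dist x (ℓ s₁) + dist y (ℓ t₁) + 4 * δ)) / 2) (by linarith)
    linarith
end

section
/- Let X be a δ-hyperbolic geodesic space, ℓ a bi-infinite geodesic, x,y ∈ X with projections x₁,y₁ on ℓ, K_x = d(x,ℓ), K_y = d(y,ℓ), d = d(x,y), d₁ = d(x₁,y₁). If every point z of [x₁,y₁] satisfies d(z,[x,y]) > 2δ, then d₁ ≤ 8δ; if some z ∈ [x₁,y₁] satisfies d(z,[x,y]) ≤ 2δ, then d₁ ≤ d − K_x − K_y + 12δ. In particular, always d₁ ≤ d + 12δ. -/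
open Metric Set

lemma geod_dist_sum {X : Type*} [MetricSpace X] {g : ℝ → X} {p₁ p₂ : X}
    (hg : IsGeodParam g p₁ p₂) {q : X} (hq : q ∈ segSet g p₁ p₂) :
    dist p₁ q + dist q p₂ = dist p₁ p₂ := by
  obtain ⟨a, ha, rfl⟩ := hq
  have h0 : (0:ℝ) ∈ Set.Icc (0:ℝ) (dist p₁ p₂) := ⟨le_refl _, dist_nonneg⟩
  have hD : dist p₁ p₂ ∈ Set.Icc (0:ℝ) (dist p₁ p₂) := ⟨dist_nonneg, le_refl _⟩
  have h1 : dist p₁ (g a) = a := by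
    have h := hg.2.2 0 h0 a ha
    rw [hg.1] at h
    rw [h, zero_sub, abs_neg, abs_of_nonneg ha.1]
  have h2 : dist (g a) p₂ = dist p₁ p₂ - a := by
    have h := hg.2.2 a ha _ hD
    rw [hg.2.1] at h
    rw [h, abs_of_nonpos (by linarith [ha.2])]
    ring
  rw [h1, h2]; ring

lemma lineSeg_geod {X : Type*} [MetricSpace X] {ℓ : ℝ → X} (hℓ : IsGeodLine ℓ) (a b : ℝ) :
    IsGeodParam (fun t => ℓ (a + (if a ≤ b then t else -t))) (ℓ a) (ℓ b) := by
  refine ⟨by simp, ?_, ?_⟩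
  · rw [hℓ a b]
    by_cases h : a ≤ b
    · simp only [if_pos h]
      rw [abs_of_nonpos (by linarith)]
      ring_nf
    · simp only [if_neg h]
      rw [abs_of_nonneg (by linarith [not_le.1 h])]
      ring_nf
  · intro s _ t _
    by_cases h : a ≤ b <;> simp only [if_pos, if_neg, h, if_true, if_false] <;> rw [hℓ]
    · congr 1; ring
    · rw [show a + -s - (a + -t) = -(s - t) by ring, abs_neg]

lemma lineSeg_mem {X : Type*} [MetricSpace X] {ℓ : ℝ → X} (hℓ : IsGeodLine ℓ) {a b u : ℝ}
    (hu : u ∈ Set.uIcc a b) :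
    ℓ u ∈ segSet (fun t => ℓ (a + (if a ≤ b then t else -t))) (ℓ a) (ℓ b) := by
  rcases Set.mem_uIcc.1 hu with ⟨h1, h2⟩ | ⟨h1, h2⟩
  · refine ⟨u - a, ⟨by linarith, ?_⟩, ?_⟩
    · rw [hℓ, abs_of_nonpos (by linarith)]; linarith
    · simp only [if_pos (le_trans h1 h2)]
      congr 1; ring
  · refine ⟨a - u, ⟨by linarith, ?_⟩, ?_⟩
    · rw [hℓ]
      rcases le_or_gt a b with h | h
      · rw [abs_of_nonpos (by linarith)]; linarith
      · rw [abs_of_nonneg (by linarith)]; linarith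
    · by_cases h : a ≤ b
      · have hu2 : u = a := le_antisymm h2 (le_trans h h1)
        simp [hu2]
      · simp only [if_neg h]
        congr 1; ring

lemma proj_lemma {X : Type*} [MetricSpace X] {δ : ℝ} (hδ : 0 ≤ δ) (hyp : DeltaThin X δ)
    (hgeo : ∀ p q : X, ∃ g : ℝ → X, IsGeodParam g p q)
    {ℓ : ℝ → X} (hℓ : IsGeodLine ℓ) (x : X) (s₁ u : ℝ)
    (hx₁ : dist x (ℓ s₁) = Metric.infDist x (Set.range ℓ)) :
    dist (ℓ s₁) (ℓ u) ≤ dist x (ℓ u) - dist x (ℓ s₁) + 4 * δ := by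
  have hKle : ∀ v : ℝ, dist x (ℓ s₁) ≤ dist x (ℓ v) := fun v => by
    rw [hx₁]; exact Metric.infDist_le_dist_of_mem ⟨v, rfl⟩
  refine le_of_forall_pos_le_add fun ε hε => ?_
  have hD : dist (ℓ s₁) (ℓ u) = |s₁ - u| := hℓ s₁ u
  by_cases hcase : dist (ℓ s₁) (ℓ u) ≤ 2*δ + ε
  · have := hKle u; linarith
  push_neg at hcase
  set r : ℝ := 2*δ + ε with hr
  have hr0 : 0 ≤ r := by positivity
  have hrD : r ≤ dist (ℓ s₁) (ℓ u) := le_of_lt hcase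
  set σ : ℝ := if s₁ ≤ u then r else -r with hσ
  -- p = point on the line at distance r from ℓ s₁, towards ℓ u
  have hp_mem : ℓ (s₁ + σ) ∈ segSet (fun t => ℓ (s₁ + (if s₁ ≤ u then t else -t))) (ℓ s₁) (ℓ u) := by
    refine ⟨r, ⟨hr0, hrD⟩, ?_⟩
    by_cases h : s₁ ≤ u <;> simp only [hσ, if_pos, if_neg, h, if_true, if_false]
  have hps : dist (ℓ (s₁ + σ)) (ℓ s₁) = r := by
    rw [hℓ]
    rcases le_or_gt s₁ u with h | h
    · rw [hσ, if_pos h, show s₁ + r - s₁ = r from by ring, abs_of_nonneg hr0]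
    · rw [hσ, if_neg (not_le.2 h), show s₁ + -r - s₁ = -r from by ring, abs_neg,
        abs_of_nonneg hr0]
  have hpu : dist (ℓ (s₁ + σ)) (ℓ u) = dist (ℓ s₁) (ℓ u) - r := by
    rw [hℓ, hD]
    rcases le_or_gt s₁ u with h | h
    · have hrD' : r ≤ u - s₁ := by
        rw [hD, abs_of_nonpos (by linarith : s₁ - u ≤ 0), neg_sub] at hrD; exact hrD
      rw [hσ, if_pos h, abs_of_nonpos (by linarith : s₁ - u ≤ 0),
        abs_of_nonpos (by linarith : s₁ + r - u ≤ 0)]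
      ring
    · have hrD' : r ≤ s₁ - u := by
        rw [hD, abs_of_nonneg (by linarith : (0:ℝ) ≤ s₁ - u)] at hrD; exact hrD
      rw [hσ, if_neg (not_le.2 h), abs_of_nonneg (by linarith : (0:ℝ) ≤ s₁ - u),
        abs_of_nonneg (by linarith : (0:ℝ) ≤ s₁ + -r - u)]
      ring
  obtain ⟨gux, hgux⟩ := hgeo (ℓ u) x
  obtain ⟨gsx, hgsx⟩ := hgeo (ℓ s₁) x
  obtain ⟨q, hq, hpq⟩ := hyp (ℓ s₁) (ℓ u) x _ gux gsx (lineSeg_geod hℓ s₁ u) hgux hgsx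
    (ℓ (s₁ + σ)) hp_mem
  have hxp : dist x (ℓ s₁) ≤ dist x (ℓ (s₁ + σ)) := hKle _
  rcases hq with hq | hq
  · -- q on the geodesic from ℓ u to x
    have hsum := geod_dist_sum hgux hq
    have t1 : dist (ℓ u) (ℓ (s₁ + σ)) ≤ dist (ℓ u) q + dist q (ℓ (s₁ + σ)) := dist_triangle _ _ _
    have t2 : dist x (ℓ (s₁ + σ)) ≤ dist x q + dist q (ℓ (s₁ + σ)) := dist_triangle _ _ _
    have c1 : dist (ℓ u) (ℓ (s₁ + σ)) = dist (ℓ (s₁ + σ)) (ℓ u) := dist_comm _ _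
    have c2 : dist q (ℓ (s₁ + σ)) = dist (ℓ (s₁ + σ)) q := dist_comm _ _
    have c3 : dist q x = dist x q := dist_comm _ _
    have c4 : dist (ℓ u) x = dist x (ℓ u) := dist_comm _ _
    linarith
  · -- q on the geodesic from ℓ s₁ to x : contradiction
    have hsum := geod_dist_sum hgsx hq
    have t2 : dist x (ℓ (s₁ + σ)) ≤ dist x q + dist q (ℓ (s₁ + σ)) := dist_triangle _ _ _
    have t3 : dist (ℓ (s₁ + σ)) (ℓ s₁) ≤ dist (ℓ (s₁ + σ)) q + dist q (ℓ s₁) := dist_triangle _ _ _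
    have c2 : dist q (ℓ (s₁ + σ)) = dist (ℓ (s₁ + σ)) q := dist_comm _ _
    have c3 : dist q x = dist x q := dist_comm _ _
    have c5 : dist (ℓ s₁) x = dist x (ℓ s₁) := dist_comm _ _
    have c6 : dist q (ℓ s₁) = dist (ℓ s₁) q := dist_comm _ _
    linarith

/-- With `x₁ = ℓ s₁`, `y₁ = ℓ t₁` projections of `x, y` on the bi-infinite geodesic `ℓ`:
if every `z ∈ [x₁,y₁]` has `d(z,[x,y]) > 2δ` then `d(x₁,y₁) ≤ 8δ`; if some
`z ∈ [x₁,y₁]` has `d(z,[x,y]) ≤ 2δ` then `d(x₁,y₁) ≤ d(x,y) − K_x − K_y + 12δ`.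
In particular `d(x₁,y₁) ≤ d(x,y) + 12δ` always. -/
theorem stmt_4 {X : Type*} [MetricSpace X] [ProperSpace X] (δ : ℝ) (hδ : 0 ≤ δ)
    (hyp : DeltaThin X δ)
    (hgeo : ∀ p q : X, ∃ g : ℝ → X, IsGeodParam g p q)
    (ℓ : ℝ → X) (hℓ : IsGeodLine ℓ) (x y : X) (s₁ t₁ : ℝ)
    (hx₁ : dist x (ℓ s₁) = Metric.infDist x (Set.range ℓ))
    (hy₁ : dist y (ℓ t₁) = Metric.infDist y (Set.range ℓ))
    (g : ℝ → X) (hg : IsGeodParam g x y) :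
    ((∀ z ∈ ℓ '' Set.uIcc s₁ t₁, 2 * δ < Metric.infDist z (segSet g x y)) →
      dist (ℓ s₁) (ℓ t₁) ≤ 8 * δ) ∧
    ((∃ z ∈ ℓ '' Set.uIcc s₁ t₁, Metric.infDist z (segSet g x y) ≤ 2 * δ) →
      dist (ℓ s₁) (ℓ t₁) ≤
        dist x y - Metric.infDist x (Set.range ℓ) - Metric.infDist y (Set.range ℓ) + 12 * δ) ∧
    dist (ℓ s₁) (ℓ t₁) ≤ dist x y + 12 * δ := by
  have hℓiso : Isometry ℓ := Isometry.of_dist_eq (fun a b => by rw [hℓ a b, Real.dist_eq])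
  have hKxle : ∀ v : ℝ, dist x (ℓ s₁) ≤ dist x (ℓ v) := fun v => by
    rw [hx₁]; exact Metric.infDist_le_dist_of_mem ⟨v, rfl⟩
  have hKyle : ∀ v : ℝ, dist y (ℓ t₁) ≤ dist y (ℓ v) := fun v => by
    rw [hy₁]; exact Metric.infDist_le_dist_of_mem ⟨v, rfl⟩
  have part1 : (∀ z ∈ ℓ '' Set.uIcc s₁ t₁, 2 * δ < Metric.infDist z (segSet g x y)) →
      dist (ℓ s₁) (ℓ t₁) ≤ 8 * δ := by
    intro h1
    have key : ∀ u ∈ Set.uIcc s₁ t₁, dist (ℓ u) (ℓ s₁) ≤ 4*δ ∨ dist (ℓ u) (ℓ t₁) ≤ 4*δ := by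
      intro u hu
      obtain ⟨gtx, hgtx⟩ := hgeo (ℓ t₁) x
      obtain ⟨gsx, hgsx⟩ := hgeo (ℓ s₁) x
      obtain ⟨gty, hgty⟩ := hgeo (ℓ t₁) y
      obtain ⟨q, hq, hzq⟩ := hyp (ℓ s₁) (ℓ t₁) x _ gtx gsx (lineSeg_geod hℓ s₁ t₁) hgtx hgsx
        (ℓ u) (lineSeg_mem hℓ hu)
      rcases hq with hq | hq
      · -- q on [ℓ t₁, x]; use second triangle (ℓ t₁, x, y)
        obtain ⟨q', hq', hqq'⟩ := hyp (ℓ t₁) x y gtx g gty hgtx hg hgty q hq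
        rcases hq' with hq' | hq'
        · exfalso
          have h2 := h1 (ℓ u) ⟨u, hu, rfl⟩
          have h3 : Metric.infDist (ℓ u) (segSet g x y) ≤ dist (ℓ u) q' :=
            Metric.infDist_le_dist_of_mem hq'
          have h4 : dist (ℓ u) q' ≤ dist (ℓ u) q + dist q q' := dist_triangle _ _ _
          linarith
        · right
          have hsum := geod_dist_sum hgty hq'
          have t1 : dist y (ℓ u) ≤ dist y q' + dist q' (ℓ u) := dist_triangle _ _ _
          have t2 : dist q' (ℓ u) ≤ dist q' q + dist q (ℓ u) := dist_triangle _ _ _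
          have t3 : dist (ℓ u) (ℓ t₁) ≤ dist (ℓ u) q + dist q q' + dist q' (ℓ t₁) :=
            dist_triangle4 _ _ _ _
          have hK := hKyle u
          have c1 : dist q' y = dist y q' := dist_comm _ _
          have c2 : dist q' q = dist q q' := dist_comm _ _
          have c3 : dist q (ℓ u) = dist (ℓ u) q := dist_comm _ _
          have c4 : dist (ℓ t₁) q' = dist q' (ℓ t₁) := dist_comm _ _
          have c5 : dist (ℓ t₁) y = dist y (ℓ t₁) := dist_comm _ _
          linarith
      · left
        have hsum := geod_dist_sum hgsx hq
        have t1 : dist x (ℓ u) ≤ dist x q + dist q (ℓ u) := dist_triangle _ _ _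
        have t2 : dist (ℓ u) (ℓ s₁) ≤ dist (ℓ u) q + dist q (ℓ s₁) := dist_triangle _ _ _
        have hK := hKxle u
        have c1 : dist q x = dist x q := dist_comm _ _
        have c2 : dist q (ℓ u) = dist (ℓ u) q := dist_comm _ _
        have c3 : dist (ℓ s₁) q = dist q (ℓ s₁) := dist_comm _ _
        have c4 : dist (ℓ s₁) x = dist x (ℓ s₁) := dist_comm _ _
        linarith
    have hconn : IsPreconnected (Set.uIcc s₁ t₁) := isPreconnected_uIcc
    have hclosedA : IsClosed {u : ℝ | dist (ℓ u) (ℓ s₁) ≤ 4*δ} :=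
      isClosed_le (Continuous.dist hℓiso.continuous continuous_const) continuous_const
    have hclosedB : IsClosed {u : ℝ | dist (ℓ u) (ℓ t₁) ≤ 4*δ} :=
      isClosed_le (Continuous.dist hℓiso.continuous continuous_const) continuous_const
    obtain ⟨u, -, hA, hB⟩ := (isPreconnected_closed_iff.1 hconn) _ _ hclosedA hclosedB
      (fun u hu => key u hu)
      ⟨s₁, Set.left_mem_uIcc, by simp only [Set.mem_setOf_eq, dist_self]; positivity⟩
      ⟨t₁, Set.right_mem_uIcc, by simp only [Set.mem_setOf_eq, dist_self]; positivity⟩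
    have t0 : dist (ℓ s₁) (ℓ t₁) ≤ dist (ℓ s₁) (ℓ u) + dist (ℓ u) (ℓ t₁) := dist_triangle _ _ _
    have c1 : dist (ℓ s₁) (ℓ u) = dist (ℓ u) (ℓ s₁) := dist_comm _ _
    have hA' : dist (ℓ u) (ℓ s₁) ≤ 4*δ := hA
    have hB' : dist (ℓ u) (ℓ t₁) ≤ 4*δ := hB
    linarith
  have part2 : (∃ z ∈ ℓ '' Set.uIcc s₁ t₁, Metric.infDist z (segSet g x y) ≤ 2 * δ) →
      dist (ℓ s₁) (ℓ t₁) ≤ dist x y - Metric.infDist x (Set.range ℓ)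
        - Metric.infDist y (Set.range ℓ) + 12 * δ := by
    rintro ⟨z, ⟨u, hu, rfl⟩, hz⟩
    have hcont : ContinuousOn g (Set.Icc 0 (dist x y)) := by
      have hlip : LipschitzOnWith 1 g (Set.Icc 0 (dist x y)) := by
        apply LipschitzOnWith.of_dist_le_mul
        intro a ha b hb
        rw [hg.2.2 a ha b hb, Real.dist_eq]
        simp
      exact hlip.continuousOn
    have hcompact : IsCompact (segSet g x y) := isCompact_Icc.image_of_continuousOn hcont
    have hne : (segSet g x y).Nonempty := ⟨x, 0, ⟨le_refl _, dist_nonneg⟩, hg.1⟩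
    obtain ⟨w, hw, hweq⟩ := hcompact.exists_infDist_eq_dist hne (ℓ u)
    have hzw : dist (ℓ u) w ≤ 2*δ := by rw [← hweq]; exact hz
    have hsum := geod_dist_sum hg hw
    have p1 := proj_lemma hδ hyp hgeo hℓ x s₁ u hx₁
    have p2 := proj_lemma hδ hyp hgeo hℓ y t₁ u hy₁
    have t0 : dist (ℓ s₁) (ℓ t₁) ≤ dist (ℓ s₁) (ℓ u) + dist (ℓ u) (ℓ t₁) := dist_triangle _ _ _
    have t1 : dist x (ℓ u) ≤ dist x w + dist w (ℓ u) := dist_triangle _ _ _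
    have t2 : dist y (ℓ u) ≤ dist y w + dist w (ℓ u) := dist_triangle _ _ _
    have c1 : dist w (ℓ u) = dist (ℓ u) w := dist_comm _ _
    have c2 : dist y w = dist w y := dist_comm _ _
    have c3 : dist (ℓ u) (ℓ t₁) = dist (ℓ t₁) (ℓ u) := dist_comm _ _
    rw [← hx₁, ← hy₁]
    linarith
  refine ⟨part1, part2, ?_⟩
  by_cases h : ∀ z ∈ ℓ '' Set.uIcc s₁ t₁, 2 * δ < Metric.infDist z (segSet g x y)
  · have h8 := part1 h
    have hd : (0:ℝ) ≤ dist x y := dist_nonneg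
    linarith
  · push_neg at h
    have h12 := part2 h
    have h1 : (0:ℝ) ≤ Metric.infDist x (Set.range ℓ) := Metric.infDist_nonneg
    have h2 : (0:ℝ) ≤ Metric.infDist y (Set.range ℓ) := Metric.infDist_nonneg
    linarith
end

section
/- Let X be a δ-hyperbolic geodesic space, ℓ a bi-infinite geodesic, x,y ∈ X with projections x₁,y₁ on ℓ, K_x = d(x,ℓ), K_y = d(y,ℓ), d = d(x,y), d₁ = d(x₁,y₁). If d ≤ K_x + K_y + 6δ, then d₁ ≤ 18δ. -/
open Metric Set

/-- Unit-speed parametrization of the segment of the line `ℓ` from `ℓ a` to `ℓ b`. -/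
noncomputable def lineParam {X : Type*} [MetricSpace X] (ℓ : ℝ → X) (a b : ℝ) : ℝ → X :=
  fun t => ℓ (a + t * (if a ≤ b then 1 else -1))

lemma lineParam_geod {X : Type*} [MetricSpace X] {ℓ : ℝ → X} (hℓ : IsGeodLine ℓ)
    (a b : ℝ) : IsGeodParam (lineParam ℓ a b) (ℓ a) (ℓ b) := by
  refine ⟨by simp [lineParam], ?_, ?_⟩
  · unfold lineParam
    rw [hℓ a b]
    split_ifs with h
    · congr 1
      rw [abs_of_nonpos (by linarith)]; ring
    · congr 1
      push_neg at h
      rw [abs_of_nonneg (by linarith)]; ring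
  · intro s _ t _
    unfold lineParam
    rw [hℓ]
    split_ifs with h
    · congr 1; ring
    · have : a + s * (-1) - (a + t * (-1)) = t - s := by ring
      rw [this, abs_sub_comm]

lemma lineParam_mem_range {X : Type*} [MetricSpace X] (ℓ : ℝ → X) (a b t : ℝ) :
    lineParam ℓ a b t ∈ Set.range ℓ := ⟨a + t * (if a ≤ b then 1 else -1), rfl⟩

lemma IsGeodParam.dist_left {X : Type*} [MetricSpace X] {g : ℝ → X} {x y : X}
    (h : IsGeodParam g x y) {v : ℝ} (hv : v ∈ Set.Icc 0 (dist x y)) :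
    dist x (g v) = v := by
  obtain ⟨h0, _, hiso⟩ := h
  have := hiso 0 ⟨le_refl 0, dist_nonneg⟩ v hv
  rw [h0] at this
  rw [this, abs_sub_comm, sub_zero, abs_of_nonneg hv.1]

lemma IsGeodParam.dist_right {X : Type*} [MetricSpace X] {g : ℝ → X} {x y : X}
    (h : IsGeodParam g x y) {v : ℝ} (hv : v ∈ Set.Icc 0 (dist x y)) :
    dist (g v) y = dist x y - v := by
  obtain ⟨_, hd, hiso⟩ := h
  have := hiso v hv (dist x y) ⟨dist_nonneg, le_refl _⟩
  rw [hd] at this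
  rw [this, abs_of_nonpos (by linarith [hv.2])]
  ring

lemma IsGeodParam.symm' {X : Type*} [MetricSpace X] {g : ℝ → X} {x y : X}
    (h : IsGeodParam g x y) : IsGeodParam (fun t => g (dist x y - t)) y x := by
  obtain ⟨h0, hd, hiso⟩ := h
  refine ⟨by simpa using hd, ?_, ?_⟩
  · simp only [dist_comm y x, sub_self, h0]
  · intro s hs t ht
    rw [dist_comm y x] at hs ht
    rw [hiso _ ⟨by linarith [hs.2], by linarith [hs.1]⟩ _ ⟨by linarith [ht.2], by linarith [ht.1]⟩]
    have : dist x y - s - (dist x y - t) = t - s := by ring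
    rw [this, abs_sub_comm]

lemma segSet_symm_subset {X : Type*} [MetricSpace X] {g : ℝ → X} {x y : X} :
    segSet (fun t => g (dist x y - t)) y x ⊆ segSet g x y := by
  rintro p ⟨t, ht, rfl⟩
  rw [dist_comm y x] at ht
  exact ⟨dist x y - t, ⟨by linarith [ht.2], by linarith [ht.1]⟩, rfl⟩

/-- Gate lemma: for any point `ℓ m` on the line, the distance from `x` to `ℓ m` is at least
`d(x, ℓ) + d(x₁, ℓ m) - 4δ`, where `x₁ = ℓ s₁` is a nearest point of the line to `x`. -/
lemma gate_lemma {X : Type*} [MetricSpace X] (δ : ℝ) (hδ : 0 ≤ δ)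
    (hyp : DeltaThin X δ)
    (hgeo : ∀ p q : X, ∃ g : ℝ → X, IsGeodParam g p q)
    (ℓ : ℝ → X) (hℓ : IsGeodLine ℓ) (x : X) (s₁ : ℝ)
    (hx₁ : dist x (ℓ s₁) = Metric.infDist x (Set.range ℓ)) (m : ℝ) :
    Metric.infDist x (Set.range ℓ) + dist (ℓ s₁) (ℓ m) - 4 * δ ≤ dist x (ℓ m) := by
  set K := Metric.infDist x (Set.range ℓ) with hK
  set D := dist (ℓ s₁) (ℓ m) with hD
  have hD0 : 0 ≤ D := dist_nonneg
  have hKm : K ≤ dist x (ℓ m) := infDist_le_dist_of_mem ⟨m, rfl⟩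
  obtain ⟨h1, hh1⟩ := hgeo (ℓ m) x
  obtain ⟨h2, hh2⟩ := hgeo (ℓ s₁) x
  have hK2 : dist (ℓ s₁) x = K := by rw [dist_comm]; exact hx₁
  have hLg := lineParam_geod hℓ s₁ m
  -- the key dichotomy for points on the segment [ℓ s₁, ℓ m]
  have key : ∀ t ∈ Set.Icc (0:ℝ) D, t ≤ 2 * δ ∨ D ≤ t + (dist x (ℓ m) - K + 2 * δ) := by
    intro t ht
    set p := lineParam ℓ s₁ m t with hp
    have hpmem : p ∈ segSet (lineParam ℓ s₁ m) (ℓ s₁) (ℓ m) := ⟨t, ht, rfl⟩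
    have hKp : K ≤ dist x p := infDist_le_dist_of_mem (lineParam_mem_range ℓ s₁ m t)
    have dps : dist (ℓ s₁) p = t := hLg.dist_left ht
    have dpm : dist p (ℓ m) = D - t := hLg.dist_right ht
    obtain ⟨q, hq, hpq⟩ :=
      hyp (ℓ s₁) (ℓ m) x (lineParam ℓ s₁ m) h1 h2 hLg hh1 hh2 p hpmem
    rcases hq with hq | hq
    · -- q on the geodesic from ℓ m to x
      obtain ⟨v, hv, rfl⟩ := hq
      right
      have d1 : dist (ℓ m) (h1 v) = v := hh1.dist_left hv
      have d2 : dist (h1 v) x = dist (ℓ m) x - v := hh1.dist_right hv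
      have e1 : K ≤ dist x (h1 v) + δ := by
        calc K ≤ dist x p := hKp
        _ ≤ dist x (h1 v) + dist (h1 v) p := dist_triangle _ _ _
        _ ≤ dist x (h1 v) + δ := by rw [dist_comm (h1 v) p]; linarith
      have e2 : D - t ≤ δ + v := by
        calc D - t = dist p (ℓ m) := dpm.symm
        _ ≤ dist p (h1 v) + dist (h1 v) (ℓ m) := dist_triangle _ _ _
        _ ≤ δ + v := by rw [dist_comm (h1 v) (ℓ m)]; linarith
      have : dist x (h1 v) = dist (ℓ m) x - v := by rw [dist_comm]; exact d2
      rw [dist_comm (ℓ m) x] at this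
      linarith [e1, e2, this ▸ e1]
    · -- q on the geodesic from ℓ s₁ to x
      obtain ⟨v, hv, rfl⟩ := hq
      left
      have d1 : dist (ℓ s₁) (h2 v) = v := hh2.dist_left hv
      have d2 : dist (h2 v) x = dist (ℓ s₁) x - v := hh2.dist_right hv
      rw [hK2] at d2
      have e1 : K ≤ (K - v) + δ := by
        calc K ≤ dist x p := hKp
        _ ≤ dist x (h2 v) + dist (h2 v) p := dist_triangle _ _ _
        _ ≤ (K - v) + δ := by
            rw [dist_comm x (h2 v), d2, dist_comm (h2 v) p]; linarith
      have e2 : t ≤ δ + v := by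
        calc t = dist (ℓ s₁) p := dps.symm
        _ ≤ dist (ℓ s₁) (h2 v) + dist (h2 v) p := dist_triangle _ _ _
        _ ≤ v + δ := by rw [d1, dist_comm (h2 v) p]; linarith
        _ = δ + v := by ring
      linarith
  -- conclude by choosing a point strictly between `2δ` and `D - C` if possible
  by_contra hcon
  push_neg at hcon
  set C := dist x (ℓ m) - K + 2 * δ with hC
  have hC0 : 0 ≤ C := by simp only [hC]; linarith
  have hDC : 2 * δ + C < D := by simp only [hC]; linarith
  set t := (2 * δ + (D - C)) / 2 with htdef
  have ht1 : 2 * δ < t := by simp only [htdef]; linarith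
  have ht2 : t + C < D := by simp only [htdef]; linarith
  have htIcc : t ∈ Set.Icc (0:ℝ) D := ⟨by linarith, by linarith⟩
  rcases key t htIcc with h | h
  · linarith
  · linarith

/-- With `x₁ = ℓ s₁`, `y₁ = ℓ t₁` projections of `x, y` on the bi-infinite geodesic `ℓ`:
if `d(x,y) ≤ K_x + K_y + 6δ` then `d(x₁,y₁) ≤ 18δ`. -/
theorem stmt_5 {X : Type*} [MetricSpace X] [ProperSpace X] (δ : ℝ) (hδ : 0 ≤ δ)
    (hyp : DeltaThin X δ)
    (hgeo : ∀ p q : X, ∃ g : ℝ → X, IsGeodParam g p q)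
    (ℓ : ℝ → X) (hℓ : IsGeodLine ℓ) (x y : X) (s₁ t₁ : ℝ)
    (hx₁ : dist x (ℓ s₁) = Metric.infDist x (Set.range ℓ))
    (hy₁ : dist y (ℓ t₁) = Metric.infDist y (Set.range ℓ))
    (g : ℝ → X) (hg : IsGeodParam g x y)
    (hd : dist x y ≤ Metric.infDist x (Set.range ℓ) + Metric.infDist y (Set.range ℓ) + 6 * δ) :
    dist (ℓ s₁) (ℓ t₁) ≤ 18 * δ := by
  set Kx := Metric.infDist x (Set.range ℓ) with hKx
  set Ky := Metric.infDist y (Set.range ℓ) with hKy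
  set d₁ := dist (ℓ s₁) (ℓ t₁) with hd₁
  have hd₁0 : 0 ≤ d₁ := dist_nonneg
  set m := (s₁ + t₁) / 2 with hm
  -- distances from the midpoint to the two projections
  have hsm : dist (ℓ s₁) (ℓ m) = d₁ / 2 := by
    rw [hℓ, hd₁, hℓ]
    have : s₁ - m = (s₁ - t₁) / 2 := by rw [hm]; ring
    rw [this, abs_div, abs_two]
  have htm : dist (ℓ t₁) (ℓ m) = d₁ / 2 := by
    rw [hℓ, hd₁, hℓ]
    have : t₁ - m = (t₁ - s₁) / 2 := by rw [hm]; ring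
    rw [this, abs_div, abs_two, abs_sub_comm]
  have hKxm : Kx ≤ dist x (ℓ m) := infDist_le_dist_of_mem ⟨m, rfl⟩
  have hKym : Ky ≤ dist y (ℓ m) := infDist_le_dist_of_mem ⟨m, rfl⟩
  have hKx2 : dist (ℓ s₁) x = Kx := by rw [dist_comm]; exact hx₁
  have hKy2 : dist (ℓ t₁) y = Ky := by rw [dist_comm]; exact hy₁
  -- midpoint lies on the segment [ℓ s₁, ℓ t₁]
  have hLg := lineParam_geod hℓ s₁ t₁
  have hmem : ℓ m ∈ segSet (lineParam ℓ s₁ t₁) (ℓ s₁) (ℓ t₁) := by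
    refine ⟨d₁ / 2, ⟨by linarith, by rw [← hd₁]; linarith⟩, ?_⟩
    unfold lineParam
    split_ifs with h
    · congr 1
      rw [hd₁, hℓ, abs_of_nonpos (by linarith), hm]; ring
    · push_neg at h
      congr 1
      rw [hd₁, hℓ, abs_of_nonneg (by linarith), hm]; ring
  obtain ⟨hy1, hhy1⟩ := hgeo (ℓ t₁) y
  obtain ⟨h2, hh2⟩ := hgeo (ℓ s₁) y
  obtain ⟨h3, hh3⟩ := hgeo (ℓ s₁) x
  -- first thinness application: triangle (ℓ s₁, ℓ t₁, y)
  obtain ⟨q₀, hq₀, dq₀⟩ :=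
    hyp (ℓ s₁) (ℓ t₁) y (lineParam ℓ s₁ t₁) hy1 h2 hLg hhy1 hh2 (ℓ m) hmem
  rcases hq₀ with hq₀ | hq₀
  · -- q₀ on [ℓ t₁, y] : then d₁/2 ≤ 2δ
    obtain ⟨v, hv, rfl⟩ := hq₀
    have d1 : dist (ℓ t₁) (hy1 v) = v := hhy1.dist_left hv
    have d2 : dist (hy1 v) y = dist (ℓ t₁) y - v := hhy1.dist_right hv
    rw [hKy2] at d2
    have e1 : Ky ≤ (Ky - v) + δ := by
      calc Ky ≤ dist y (ℓ m) := hKym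
      _ ≤ dist y (hy1 v) + dist (hy1 v) (ℓ m) := dist_triangle _ _ _
      _ ≤ (Ky - v) + δ := by
          rw [dist_comm y (hy1 v), d2, dist_comm (hy1 v) (ℓ m)]; linarith
    have e2 : d₁ / 2 ≤ v + δ := by
      calc d₁ / 2 = dist (ℓ m) (ℓ t₁) := by rw [dist_comm]; exact htm.symm
      _ ≤ dist (ℓ m) (hy1 v) + dist (hy1 v) (ℓ t₁) := dist_triangle _ _ _
      _ ≤ v + δ := by rw [dist_comm (hy1 v) (ℓ t₁), d1]; linarith
    linarith
  · -- q₀ on [ℓ s₁, y] : second thinness application, triangle (ℓ s₁, y, x)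
    obtain ⟨w, hw, rfl⟩ := hq₀
    have hgsymm := hg.symm'
    obtain ⟨q₁, hq₁, dq₁⟩ :=
      hyp (ℓ s₁) y x h2 (fun t => g (dist x y - t)) h3 hh2 hgsymm hh3
        (h2 w) ⟨w, hw, rfl⟩
    rcases hq₁ with hq₁ | hq₁
    · -- q₁ on [x, y] : use the two gate inequalities
      have hq₁' : q₁ ∈ segSet g x y := segSet_symm_subset hq₁
      obtain ⟨u, hu, rfl⟩ := hq₁'
      have dxq : dist x (g u) = u := hg.dist_left hu
      have dqy : dist (g u) y = dist x y - u := hg.dist_right hu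
      have hmq : dist (ℓ m) (g u) ≤ 2 * δ := by
        calc dist (ℓ m) (g u) ≤ dist (ℓ m) (h2 w) + dist (h2 w) (g u) := dist_triangle _ _ _
        _ ≤ 2 * δ := by linarith
      have gx := gate_lemma δ hδ hyp hgeo ℓ hℓ x s₁ hx₁ m
      have gy := gate_lemma δ hδ hyp hgeo ℓ hℓ y t₁ hy₁ m
      rw [← hKx, hsm] at gx
      rw [← hKy, htm] at gy
      have ex : dist x (ℓ m) ≤ u + 2 * δ := by
        calc dist x (ℓ m) ≤ dist x (g u) + dist (g u) (ℓ m) := dist_triangle _ _ _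
        _ ≤ u + 2 * δ := by rw [dxq, dist_comm (g u) (ℓ m)]; linarith
      have ey : dist y (ℓ m) ≤ (dist x y - u) + 2 * δ := by
        calc dist y (ℓ m) ≤ dist y (g u) + dist (g u) (ℓ m) := dist_triangle _ _ _
        _ ≤ (dist x y - u) + 2 * δ := by rw [dist_comm y (g u), dqy, dist_comm (g u) (ℓ m)]; linarith
      linarith
    · -- q₁ on [ℓ s₁, x] : then d₁/2 ≤ 4δ
      obtain ⟨v, hv, rfl⟩ := hq₁
      have d1 : dist (ℓ s₁) (h3 v) = v := hh3.dist_left hv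
      have d2 : dist (h3 v) x = dist (ℓ s₁) x - v := hh3.dist_right hv
      rw [hKx2] at d2
      have e1 : Kx ≤ (Kx - v) + 2 * δ := by
        calc Kx ≤ dist x (ℓ m) := hKxm
        _ ≤ dist x (h3 v) + dist (h3 v) (h2 w) + dist (h2 w) (ℓ m) :=
            dist_triangle4 _ _ _ _
        _ ≤ (Kx - v) + 2 * δ := by
            rw [dist_comm x (h3 v), d2, dist_comm (h3 v) (h2 w), dist_comm (h2 w) (ℓ m)]
            linarith
      have e2 : d₁ / 2 ≤ v + 2 * δ := by
        calc d₁ / 2 = dist (ℓ m) (ℓ s₁) := by rw [dist_comm]; exact hsm.symm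
        _ ≤ dist (ℓ m) (h2 w) + dist (h2 w) (h3 v) + dist (h3 v) (ℓ s₁) :=
            dist_triangle4 _ _ _ _
        _ ≤ v + 2 * δ := by rw [dist_comm (h3 v) (ℓ s₁), d1]; linarith
      linarith
end

section
/- Let X be a δ-hyperbolic geodesic space, ℓ a bi-infinite geodesic, K > 0, and f : [a,b] → X a continuous rectifiable path with d(f(t),ℓ) ≥ K for all t. Set x = f(a), y = f(b), L = length(f([a,b])), and suppose L > 2δ. Then for every point z on a geodesic segment [x,y] there exists t ∈ [a,b] such that L ≥ (2^{d(z,f(t))/δ − 1} − 2)δ. -/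
open Metric Set

/-! Bisect the path at half its length: if `f c` is the arc-length midpoint of `f` on `[a, b]`,
δ-thinness of the triangle `f a, f b, f c` puts every point of `[f a, f b]` within `δ` of a
geodesic joining the endpoints of one half, whose length is `L / 2`. After `N` bisections a point
of `[f a, f b]` is within `N δ + L / 2 ^ (N + 1)` of the path, the last term bounding the distance
to the nearer endpoint of a geodesic of length at most `L / 2 ^ N`. Taking
`2 ^ N ≤ L / δ + 2 < 2 ^ (N + 1)` gives the estimate. -/

theorem continuousOn_variationOnFromTo {α E : Type*} [LinearOrder α] [TopologicalSpace α]
    [OrderTopology α] [PseudoMetricSpace E] {f : α → E} {s : Set α}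
    (hbv : LocallyBoundedVariationOn f s) (hf : ContinuousOn f s) {a : α} (ha : a ∈ s) :
    ContinuousOn (variationOnFromTo f s a) s := by
  intro x hx
  have hfx := (hf x hx).tendsto
  rw [continuousWithinAt_iff_continuous_left'_right']
  constructor
  · have h := variationOnFromTo.tendsto_left ha hx hbv
      (hfx.mono_left (nhdsWithin_mono _ inter_subset_left))
    rwa [dist_self, sub_zero] at h
  · have h := variationOnFromTo.tendsto_right ha hx hbv
      (hfx.mono_left (nhdsWithin_mono _ inter_subset_left))
    rwa [dist_self, add_zero] at h

theorem exists_eVariationOn_Icc_eq_half {α E : Type*} [ConditionallyCompleteLinearOrder α]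
    [DenselyOrdered α] [TopologicalSpace α] [OrderTopology α] [PseudoMetricSpace E]
    {f : α → E} {a b : α} (hab : a ≤ b) (hf : ContinuousOn f (Icc a b))
    (hbv : BoundedVariationOn f (Icc a b)) :
    ∃ c ∈ Icc a b,
      (eVariationOn f (Icc a c)).toReal = (eVariationOn f (Icc a b)).toReal / 2 ∧
      (eVariationOn f (Icc c b)).toReal = (eVariationOn f (Icc a b)).toReal / 2 := by
  have hlbv := hbv.locallyBoundedVariationOn
  have ha : a ∈ Icc a b := left_mem_Icc.2 hab
  have hb : b ∈ Icc a b := right_mem_Icc.2 hab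
  have hfrom : ∀ c ∈ Icc a b,
      variationOnFromTo f (Icc a b) a c = (eVariationOn f (Icc a c)).toReal := fun c hc => by
    rw [variationOnFromTo.eq_of_le _ _ hc.1, Icc_inter_Icc, max_self, min_eq_right hc.2]
  have hto : ∀ c ∈ Icc a b,
      variationOnFromTo f (Icc a b) c b = (eVariationOn f (Icc c b)).toReal := fun c hc => by
    rw [variationOnFromTo.eq_of_le _ _ hc.2, Icc_inter_Icc, max_eq_right hc.1, min_self]
  obtain ⟨c, hc, hhalf⟩ :
      (eVariationOn f (Icc a b)).toReal / 2 ∈ variationOnFromTo f (Icc a b) a '' Icc a b := by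
    refine intermediate_value_Icc hab (continuousOn_variationOnFromTo hlbv hf ha) ⟨?_, ?_⟩
    · rw [variationOnFromTo.self]; positivity
    · rw [hfrom b hb]; linarith [ENNReal.toReal_nonneg (a := eVariationOn f (Icc a b))]
  have hsplit := variationOnFromTo.add hlbv ha hc hb
  rw [hhalf, hto c hc, hfrom b hb] at hsplit
  exact ⟨c, hc, (hfrom c hc).symm.trans hhalf, by linarith⟩

namespace IsGeodParam

variable {X : Type*} [MetricSpace X] {g : ℝ → X} {p q : X}

theorem dist_apply_start (h : IsGeodParam g p q) {s : ℝ} (hs : s ∈ Icc 0 (dist p q)) :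
    dist (g s) p = s := by
  rw [← h.1, h.2.2 s hs 0 ⟨le_rfl, dist_nonneg⟩, sub_zero, abs_of_nonneg hs.1]

theorem dist_apply_end (h : IsGeodParam g p q) {s : ℝ} (hs : s ∈ Icc 0 (dist p q)) :
    dist (g s) q = dist p q - s := by
  conv_lhs => rw [← h.2.1]
  rw [h.2.2 s hs _ ⟨dist_nonneg, le_rfl⟩, abs_of_nonpos (by linarith [hs.2]), neg_sub]

theorem dist_start_le_half_or_dist_end_le_half (h : IsGeodParam g p q) {z : X}
    (hz : z ∈ segSet g p q) : dist z p ≤ dist p q / 2 ∨ dist z q ≤ dist p q / 2 := by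
  obtain ⟨s, hs, rfl⟩ := hz
  rw [h.dist_apply_start hs, h.dist_apply_end hs]
  by_contra! hfar
  linarith [hfar.1, hfar.2]

theorem exists_reverse (h : IsGeodParam g p q) :
    ∃ g' : ℝ → X, IsGeodParam g' q p ∧ segSet g' q p = segSet g p q := by
  have hd : dist q p = dist p q := dist_comm q p
  refine ⟨fun s => g (dist p q - s), ⟨by simpa using h.2.1, by simp [hd, h.1], ?_⟩, ?_⟩
  · intro s hs t ht
    rw [hd] at hs ht
    rw [h.2.2 _ ⟨by linarith [hs.2], by linarith [hs.1]⟩ _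
      ⟨by linarith [ht.2], by linarith [ht.1]⟩, abs_sub_comm]
    ring_nf
  · show (fun s => g (dist p q - s)) '' Icc 0 (dist q p) = g '' Icc 0 (dist p q)
    rw [hd, ← image_image (f := fun s => dist p q - s) (g := g), image_const_sub_Icc]
    norm_num

end IsGeodParam

theorem DeltaThin.exists_dist_le_of_path {X : Type*} [MetricSpace X] {δ : ℝ}
    (hyp : DeltaThin X δ) (hgeo : ∀ p q : X, ∃ g : ℝ → X, IsGeodParam g p q) {f : ℝ → X}
    (N : ℕ) {a b : ℝ} (hab : a ≤ b) (hf : ContinuousOn f (Icc a b))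
    (hbv : BoundedVariationOn f (Icc a b)) {g : ℝ → X} (hg : IsGeodParam g (f a) (f b))
    {z : X} (hz : z ∈ segSet g (f a) (f b)) :
    ∃ t ∈ Icc a b, dist z (f t) ≤ N * δ + (eVariationOn f (Icc a b)).toReal / 2 ^ (N + 1) := by
  induction N generalizing a b g z with
  | zero =>
    have hlen := hbv.dist_le (left_mem_Icc.2 hab) (right_mem_Icc.2 hab)
    simp only [CharP.cast_eq_zero, zero_mul, zero_add, pow_one]
    rcases hg.dist_start_le_half_or_dist_end_le_half hz with h | h
    · exact ⟨a, left_mem_Icc.2 hab, by linarith⟩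
    · exact ⟨b, right_mem_Icc.2 hab, by linarith⟩
  | succ N ih =>
    set V := (eVariationOn f (Icc a b)).toReal
    obtain ⟨c, hc, hVac, hVcb⟩ := exists_eVariationOn_Icc_eq_half hab hf hbv
    have hac : Icc a c ⊆ Icc a b := Icc_subset_Icc_right hc.2
    have hcb : Icc c b ⊆ Icc a b := Icc_subset_Icc_left hc.1
    obtain ⟨gcb, hgcb⟩ := hgeo (f c) (f b)
    obtain ⟨gbc, hgbc, hseg⟩ := hgcb.exists_reverse
    obtain ⟨gac, hgac⟩ := hgeo (f a) (f c)
    obtain ⟨q, hq, hzq⟩ := hyp _ _ _ g gbc gac hg hgbc hgac z hz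
    have hstep : ∀ t, dist q (f t) ≤ N * δ + V / 2 / 2 ^ (N + 1) →
        dist z (f t) ≤ (N + 1 : ℕ) * δ + V / 2 ^ (N + 1 + 1) := fun t hqt => by
      have hV : V / 2 / 2 ^ (N + 1) = V / 2 ^ (N + 1 + 1) := by rw [pow_succ]; ring
      push_cast
      linarith [dist_triangle z q (f t)]
    rcases hq with hq | hq
    · rw [hseg] at hq
      obtain ⟨t, ht, hqt⟩ := ih hc.2 (hf.mono hcb) (hbv.mono hcb) hgcb hq
      rw [hVcb] at hqt
      exact ⟨t, hcb ht, hstep t hqt⟩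
    · obtain ⟨t, ht, hqt⟩ := ih hc.1 (hf.mono hac) (hbv.mono hac) hgac hq
      rw [hVac] at hqt
      exact ⟨t, hac ht, hstep t hqt⟩

theorem two_rpow_sub_two_mul_le {δ L d : ℝ} (hδ : 0 < δ) {N : ℕ}
    (hN : (2 : ℝ) ^ N ≤ L / δ + 2) (hN' : L / δ + 2 < 2 ^ (N + 1))
    (hd : d ≤ N * δ + L / 2 ^ (N + 1)) : ((2 : ℝ) ^ (d / δ - 1) - 2) * δ ≤ L := by
  have hpow : (0 : ℝ) < 2 ^ (N + 1) := by positivity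
  have hL : L / 2 ^ (N + 1) ≤ δ := by
    have hLδ : L / δ < 2 ^ (N + 1) := by linarith
    rw [div_lt_iff₀ hδ] at hLδ
    rw [div_le_iff₀ hpow]
    linarith
  have hexp : d / δ - 1 ≤ N := by
    rw [sub_le_iff_le_add, div_le_iff₀ hδ]
    linarith
  have h2 : (2 : ℝ) ^ (d / δ - 1) ≤ L / δ + 2 :=
    calc (2 : ℝ) ^ (d / δ - 1) ≤ (2 : ℝ) ^ (N : ℝ) :=
          Real.rpow_le_rpow_of_exponent_le one_le_two hexp
      _ = 2 ^ N := Real.rpow_natCast 2 N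
      _ ≤ L / δ + 2 := hN
  calc ((2 : ℝ) ^ (d / δ - 1) - 2) * δ ≤ L / δ * δ := by gcongr; linarith
    _ = L := div_mul_cancel₀ L hδ.ne'

theorem stmt_6_general {X : Type*} [MetricSpace X] (δ : ℝ) (hδ : 0 < δ)
    (hyp : DeltaThin X δ)
    (hgeo : ∀ p q : X, ∃ g : ℝ → X, IsGeodParam g p q)
    (a b : ℝ) (hab : a ≤ b) (f : ℝ → X) (hf : ContinuousOn f (Set.Icc a b))
    (hrect : eVariationOn f (Set.Icc a b) ≠ ⊤)
    (g : ℝ → X) (hg : IsGeodParam g (f a) (f b)) :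
    ∀ z ∈ segSet g (f a) (f b), ∃ t ∈ Set.Icc a b,
      ((2 : ℝ) ^ (dist z (f t) / δ - 1) - 2) * δ ≤ (eVariationOn f (Set.Icc a b)).toReal := by
  intro z hz
  have hx : 1 ≤ (eVariationOn f (Icc a b)).toReal / δ + 2 := by
    have : 0 ≤ (eVariationOn f (Icc a b)).toReal / δ := by positivity
    linarith
  obtain ⟨N, hN, hN'⟩ := exists_nat_pow_near hx one_lt_two
  obtain ⟨t, ht, hd⟩ := hyp.exists_dist_le_of_path hgeo N hab hf hrect hg hz
  exact ⟨t, ht, two_rpow_sub_two_mul_le hδ hN hN' hd⟩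

/-- Let `f : [a,b] → X` be a continuous rectifiable path staying at distance `≥ K` from a
bi-infinite geodesic `ℓ`, with length `L > 2δ`. Then for every `z` on a geodesic segment
`[f a, f b]` there is `t ∈ [a,b]` with `L ≥ (2^{d(z, f t)/δ − 1} − 2)·δ`. -/
theorem stmt_6 {X : Type*} [MetricSpace X] [ProperSpace X] (δ : ℝ) (hδ : 0 < δ)
    (hyp : DeltaThin X δ)
    (hgeo : ∀ p q : X, ∃ g : ℝ → X, IsGeodParam g p q)
    (ℓ : ℝ → X) (hℓ : IsGeodLine ℓ) (K : ℝ) (hK : 0 < K)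
    (a b : ℝ) (hab : a ≤ b) (f : ℝ → X) (hf : ContinuousOn f (Set.Icc a b))
    (hrect : eVariationOn f (Set.Icc a b) ≠ ⊤)
    (hfar : ∀ t ∈ Set.Icc a b, K ≤ Metric.infDist (f t) (Set.range ℓ))
    (g : ℝ → X) (hg : IsGeodParam g (f a) (f b))
    (hL : 2 * δ < (eVariationOn f (Set.Icc a b)).toReal) :
    ∀ z ∈ segSet g (f a) (f b), ∃ t ∈ Set.Icc a b,
      ((2 : ℝ) ^ (dist z (f t) / δ - 1) - 2) * δ ≤ (eVariationOn f (Set.Icc a b)).toReal :=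
  stmt_6_general δ hδ hyp hgeo a b hab f hf hrect g hg
end

section
/- Let X be a δ-hyperbolic geodesic space, ℓ a bi-infinite geodesic, K > 0, and f : [a,b] → X a continuous rectifiable path with d(f(t),ℓ) ≥ K for all t ∈ [a,b]. Set x = f(a), y = f(b), d = d(x,y), K_x = d(x,ℓ), K_y = d(y,ℓ). Let x₁,y₁ be projections of x,y on ℓ and [x,y] a geodesic segment. If every z ∈ [x,y] satisfies d(z,[x₁,y₁]) > 2δ, then there exists z ∈ [x,y] such that for all t ∈ [a,b], d(z,f(t)) ≥ d/2 + K − (K_x + K_y)/2 − 4δ. If instead some z ∈ [x,y] satisfies d(z,[x₁,y₁]) ≤ 2δ, then there exists z ∈ [x,y] such that for all t ∈ [a,b], d(z,f(t)) ≥ K − 2δ. -/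
open Metric Set

/-- Let `f : [a,b] → X` be a continuous rectifiable path staying at distance `≥ K` from the
bi-infinite geodesic `ℓ`, `x = f a`, `y = f b`, and `x₁ = ℓ s₁`, `y₁ = ℓ t₁` projections
of `x, y` on `ℓ`. If every `z ∈ [x,y]` has `d(z,[x₁,y₁]) > 2δ`, then some `z ∈ [x,y]`
satisfies `d(z, f t) ≥ d/2 + K − (K_x + K_y)/2 − 4δ` for all `t`; if some `z ∈ [x,y]` has
`d(z,[x₁,y₁]) ≤ 2δ`, then some `z ∈ [x,y]` satisfies `d(z, f t) ≥ K − 2δ` for all `t`. -/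
theorem stmt_7 {X : Type*} [MetricSpace X] [ProperSpace X] (δ : ℝ) (hδ : 0 ≤ δ)
    (hyp : DeltaThin X δ)
    (hgeo : ∀ p q : X, ∃ g : ℝ → X, IsGeodParam g p q)
    (ℓ : ℝ → X) (hℓ : IsGeodLine ℓ) (K : ℝ) (hK : 0 < K)
    (a b : ℝ) (hab : a ≤ b) (f : ℝ → X) (hf : ContinuousOn f (Set.Icc a b))
    (hrect : eVariationOn f (Set.Icc a b) ≠ ⊤)
    (hfar : ∀ t ∈ Set.Icc a b, K ≤ Metric.infDist (f t) (Set.range ℓ))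
    (s₁ t₁ : ℝ)
    (hx₁ : dist (f a) (ℓ s₁) = Metric.infDist (f a) (Set.range ℓ))
    (hy₁ : dist (f b) (ℓ t₁) = Metric.infDist (f b) (Set.range ℓ))
    (g : ℝ → X) (hg : IsGeodParam g (f a) (f b)) :
    ((∀ z ∈ segSet g (f a) (f b), 2 * δ < Metric.infDist z (ℓ '' Set.uIcc s₁ t₁)) →
      ∃ z ∈ segSet g (f a) (f b), ∀ t ∈ Set.Icc a b,
        dist (f a) (f b) / 2 + K -
            (Metric.infDist (f a) (Set.range ℓ) + Metric.infDist (f b) (Set.range ℓ)) / 2 -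
            4 * δ ≤ dist z (f t)) ∧
    ((∃ z ∈ segSet g (f a) (f b), Metric.infDist z (ℓ '' Set.uIcc s₁ t₁) ≤ 2 * δ) →
      ∃ z ∈ segSet g (f a) (f b), ∀ t ∈ Set.Icc a b, K - 2 * δ ≤ dist z (f t)) := by

  classical
  obtain ⟨hg0, hgd, hgdist⟩ := hg
  set x := f a with hxdef
  set y := f b with hydef
  set d := dist x y with hd
  set Kx := Metric.infDist x (Set.range ℓ) with hKxdef
  set Ky := Metric.infDist y (Set.range ℓ) with hKydef
  have hd0 : (0:ℝ) ≤ d := dist_nonneg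
  have hrne : (Set.range ℓ).Nonempty := ⟨ℓ 0, 0, rfl⟩
  have hKxy : Kx ≤ Ky + d := by
    have := Metric.infDist_le_infDist_add_dist (x := x) (y := y) (s := Set.range ℓ)
    simpa [← hd] using this
  have hKyx : Ky ≤ Kx + d := by
    have := Metric.infDist_le_infDist_add_dist (x := y) (y := x) (s := Set.range ℓ)
    rw [dist_comm] at this
    simpa [← hd] using this
  set u := (d + Kx - Ky) / 2 with hu
  have hu0 : 0 ≤ u := by rw [hu]; linarith
  have hud : u ≤ d := by rw [hu]; linarith
  set z := g u with hzdef
  have hzmem : z ∈ segSet g x y := ⟨u, ⟨hu0, hud⟩, rfl⟩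
  have hdxz : dist x z = u := by
    have h1 := hgdist 0 ⟨le_refl 0, hd0⟩ u ⟨hu0, hud⟩
    rw [hg0] at h1
    rw [hzdef, h1, abs_of_nonpos (by linarith), neg_sub, sub_zero]
  have hdyz : dist y z = d - u := by
    have h1 := hgdist d ⟨hd0, le_refl d⟩ u ⟨hu0, hud⟩
    rw [hgd] at h1
    rw [hzdef, h1, abs_of_nonneg (by linarith)]
  constructor
  · -- First part
    intro hfarseg
    refine ⟨z, hzmem, ?_⟩
    -- geodesics: h1 from x to ℓ t₁, gy from y to ℓ t₁, k from x to ℓ s₁, e along ℓ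
    obtain ⟨h1, hh1⟩ := hgeo x (ℓ t₁)
    obtain ⟨gy, hgy⟩ := hgeo y (ℓ t₁)
    obtain ⟨k, hk⟩ := hgeo x (ℓ s₁)
    set e : ℝ → X := fun r => ℓ (t₁ + (if t₁ ≤ s₁ then r else -r)) with hedef
    have hdist_ts : dist (ℓ t₁) (ℓ s₁) = |t₁ - s₁| := hℓ t₁ s₁
    have he_geod : IsGeodParam e (ℓ t₁) (ℓ s₁) := by
      refine ⟨by simp [hedef], ?_, ?_⟩
      · rw [hdist_ts, hedef]
        by_cases hts : t₁ ≤ s₁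
        · simp only [hts, if_true]
          rw [abs_of_nonpos (by linarith)]
          ring_nf
        · simp only [hts, if_false]
          rw [abs_of_nonneg (by push_neg at hts; linarith)]
          ring_nf
      · intro s hs t ht
        rw [hedef]
        simp only
        rw [hℓ]
        by_cases hts : t₁ ≤ s₁
        · simp only [hts, if_true]
          rw [show t₁ + s - (t₁ + t) = s - t by ring]
        · simp only [hts, if_false]
          rw [show t₁ + -s - (t₁ + -t) = -(s - t) by ring, abs_neg]
    have he_sub : segSet e (ℓ t₁) (ℓ s₁) ⊆ ℓ '' Set.uIcc s₁ t₁ := by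
      rintro _ ⟨r, ⟨hr0, hr1⟩, rfl⟩
      rw [hdist_ts] at hr1
      refine ⟨t₁ + (if t₁ ≤ s₁ then r else -r), ?_, rfl⟩
      rw [Set.mem_uIcc]
      by_cases hts : t₁ ≤ s₁
      · simp only [hts, if_true]
        right
        constructor
        · linarith
        · rw [abs_of_nonpos (by linarith)] at hr1; linarith
      · push_neg at hts
        simp only [not_le.mpr hts, if_false]
        left
        constructor
        · rw [abs_of_nonneg (by linarith)] at hr1; linarith
        · linarith
    -- key bound on infDist z (range ℓ)
    have key : Metric.infDist z (Set.range ℓ) ≤ (Kx + Ky) / 2 - d / 2 + 4 * δ := by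
      obtain ⟨q, hq, hzq⟩ := hyp x y (ℓ t₁) g gy h1 ⟨hg0, hgd, hgdist⟩ hgy hh1 z hzmem
      rcases hq with hq | hq
      · -- q on [y, ℓ t₁]
        obtain ⟨r, ⟨hr0, hr1⟩, rfl⟩ := hq
        obtain ⟨hgy0, hgyd, hgydist⟩ := hgy
        have hDy : dist y (ℓ t₁) = Ky := hy₁
        rw [hDy] at hr1 hgyd hgydist
        have hyq : dist y (gy r) = r := by
          have := hgydist 0 ⟨le_refl 0, by linarith⟩ r ⟨hr0, hr1⟩
          rw [hgy0] at this
          rw [this, abs_of_nonpos (by linarith), neg_sub, sub_zero]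
        have hqt : dist (gy r) (ℓ t₁) = Ky - r := by
          have := hgydist r ⟨hr0, hr1⟩ Ky ⟨by linarith, le_refl Ky⟩
          rw [hgyd] at this
          rw [this, abs_of_nonpos (by linarith), neg_sub]
        have hr_lb : d - u - δ ≤ r := by
          have htri : dist y z ≤ dist y (gy r) + dist (gy r) z := dist_triangle _ _ _
          rw [hdyz, hyq, dist_comm (gy r) z] at htri
          linarith
        have : Metric.infDist z (Set.range ℓ) ≤ dist z (ℓ t₁) :=
          Metric.infDist_le_dist_of_mem ⟨t₁, rfl⟩
        have htri2 : dist z (ℓ t₁) ≤ dist z (gy r) + dist (gy r) (ℓ t₁) := dist_triangle _ _ _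
        rw [hqt] at htri2
        linarith [hu]
      · -- q on [x, ℓ t₁], second triangle x, ℓ t₁, ℓ s₁
        obtain ⟨q', hq', hqq'⟩ := hyp x (ℓ t₁) (ℓ s₁) h1 e k hh1 he_geod hk q hq
        rcases hq' with hq' | hq'
        · -- q' on segment of ℓ: contradiction
          exfalso
          have hmem : q' ∈ ℓ '' Set.uIcc s₁ t₁ := he_sub hq'
          have h2 : Metric.infDist z (ℓ '' Set.uIcc s₁ t₁) ≤ dist z q' :=
            Metric.infDist_le_dist_of_mem hmem
          have h3 : dist z q' ≤ dist z q + dist q q' := dist_triangle _ _ _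
          have h4 := hfarseg z hzmem
          linarith
        · -- q' on [x, ℓ s₁]
          obtain ⟨r', ⟨hr'0, hr'1⟩, rfl⟩ := hq'
          obtain ⟨hk0, hkd, hkdist⟩ := hk
          have hDx : dist x (ℓ s₁) = Kx := hx₁
          rw [hDx] at hr'1 hkd hkdist
          have hxq' : dist x (k r') = r' := by
            have := hkdist 0 ⟨le_refl 0, by linarith⟩ r' ⟨hr'0, hr'1⟩
            rw [hk0] at this
            rw [this, abs_of_nonpos (by linarith), neg_sub, sub_zero]
          have hq's : dist (k r') (ℓ s₁) = Kx - r' := by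
            have := hkdist r' ⟨hr'0, hr'1⟩ Kx ⟨by linarith, le_refl Kx⟩
            rw [hkd] at this
            rw [this, abs_of_nonpos (by linarith), neg_sub]
          have hr'_lb : u - 2 * δ ≤ r' := by
            have htri : dist x z ≤ dist x (k r') + dist (k r') z := dist_triangle _ _ _
            have htri' : dist (k r') z ≤ dist (k r') q + dist q z := dist_triangle _ _ _
            rw [hdxz, hxq'] at htri
            rw [dist_comm (k r') q, dist_comm q z] at htri'
            linarith
          have hin : Metric.infDist z (Set.range ℓ) ≤ dist z (ℓ s₁) :=
            Metric.infDist_le_dist_of_mem ⟨s₁, rfl⟩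
          have htri2 : dist z (ℓ s₁) ≤ dist z q + dist q (k r') + dist (k r') (ℓ s₁) :=
            dist_triangle4 _ _ _ _
          rw [hq's] at htri2
          linarith [hu]
    intro t ht
    have h5 := hfar t ht
    have h6 : Metric.infDist (f t) (Set.range ℓ) ≤ Metric.infDist z (Set.range ℓ) + dist (f t) z :=
      Metric.infDist_le_infDist_add_dist
    rw [dist_comm (f t) z] at h6
    linarith
  · -- Second part
    rintro ⟨z₀, hz₀mem, hz₀⟩
    refine ⟨z₀, hz₀mem, ?_⟩
    intro t ht
    have hsub : ℓ '' Set.uIcc s₁ t₁ ⊆ Set.range ℓ := by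
      rintro _ ⟨v, _, rfl⟩; exact ⟨v, rfl⟩
    have hne : (ℓ '' Set.uIcc s₁ t₁).Nonempty := ⟨ℓ s₁, s₁, Set.left_mem_uIcc, rfl⟩
    have h1 : Metric.infDist z₀ (Set.range ℓ) ≤ Metric.infDist z₀ (ℓ '' Set.uIcc s₁ t₁) :=
      Metric.infDist_le_infDist_of_subset hsub hne
    have h2 := hfar t ht
    have h3 : Metric.infDist (f t) (Set.range ℓ) ≤ Metric.infDist z₀ (Set.range ℓ) + dist (f t) z₀ :=
      Metric.infDist_le_infDist_add_dist
    rw [dist_comm (f t) z₀] at h3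
    linarith
end

section
/- Let E : [a,b] → ℝ be an excursion of length l = b − a, and let T_E = { l' ∈ [0,l] : there exists a sub-excursion of E of length l' }. Then T_E is a closed subset of [0,l]. -/
open Filter Topology

/-- An excursion: a continuous map `E` on `[a,b]` with `E a = E b` and `E a` the minimum. -/
def IsExcursion (E : ℝ → ℝ) (a b : ℝ) : Prop :=
  a ≤ b ∧ ContinuousOn E (Set.Icc a b) ∧ E a = E b ∧ ∀ t ∈ Set.Icc a b, E a ≤ E t

/-- The set of lengths of sub-excursions of an excursion `E : [a,b] → ℝ` is closed. -/
theorem stmt_12 (E : ℝ → ℝ) (a b : ℝ) (hE : IsExcursion E a b) :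
    IsClosed {l' : ℝ | ∃ c d : ℝ, a ≤ c ∧ c ≤ d ∧ d ≤ b ∧ IsExcursion E c d ∧ d - c = l'} := by
  obtain ⟨hab, hcont, hEab, hmin⟩ := hE
  set K : Set (ℝ × ℝ) := {p | p ∈ Set.Icc a b ×ˢ Set.Icc a b ∧ p.1 ≤ p.2 ∧
      E p.1 = E p.2 ∧ ∀ t ∈ Set.Icc p.1 p.2, E p.1 ≤ E t} with hKdef
  -- sequential limit of E along sequences inside [a,b]
  have key : ∀ (x : ℝ), x ∈ Set.Icc a b → ∀ (v : ℕ → ℝ), (∀ n, v n ∈ Set.Icc a b) →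
      Tendsto v atTop (𝓝 x) → Tendsto (fun n => E (v n)) atTop (𝓝 (E x)) := by
    intro x hx v hv hvx
    exact (hcont x hx).tendsto.comp
      (tendsto_nhdsWithin_iff.mpr ⟨hvx, Filter.Eventually.of_forall hv⟩)
  have hKclosed : IsClosed K := by
    rw [← isSeqClosed_iff_isClosed]
    intro u p hu hup
    have h1 : Tendsto (fun n => (u n).1) atTop (𝓝 p.1) :=
      (continuous_fst.tendsto p).comp hup
    have h2 : Tendsto (fun n => (u n).2) atTop (𝓝 p.2) :=
      (continuous_snd.tendsto p).comp hup
    have hu1 : ∀ n, (u n).1 ∈ Set.Icc a b := fun n => (hu n).1.1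
    have hu2 : ∀ n, (u n).2 ∈ Set.Icc a b := fun n => (hu n).1.2
    have hp1 : p.1 ∈ Set.Icc a b := by
      have : IsClosed (Set.Icc a b) := isClosed_Icc
      exact this.mem_of_tendsto h1 (Filter.Eventually.of_forall hu1)
    have hp2 : p.2 ∈ Set.Icc a b := by
      exact isClosed_Icc.mem_of_tendsto h2 (Filter.Eventually.of_forall hu2)
    have hle : p.1 ≤ p.2 := le_of_tendsto_of_tendsto' h1 h2 (fun n => (hu n).2.1)
    refine ⟨⟨hp1, hp2⟩, hle, ?_, ?_⟩
    · exact tendsto_nhds_unique (key p.1 hp1 _ hu1 h1) (by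
        have := key p.2 hp2 _ hu2 h2
        exact this.congr (fun n => ((hu n).2.2.1).symm))
    · intro t ht
      set v : ℕ → ℝ := fun n => max (u n).1 (min (u n).2 t) with hvdef
      have hvmem : ∀ n, v n ∈ Set.Icc (u n).1 (u n).2 := by
        intro n
        constructor
        · exact le_max_left _ _
        · exact max_le (hu n).2.1 (min_le_left _ _)
      have hvab : ∀ n, v n ∈ Set.Icc a b := fun n =>
        ⟨le_trans (hu1 n).1 (hvmem n).1, le_trans (hvmem n).2 (hu2 n).2⟩
      have hvt : Tendsto v atTop (𝓝 t) := by
        have : Tendsto v atTop (𝓝 (max p.1 (min p.2 t))) :=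
          (h1.max (h2.min tendsto_const_nhds))
        rwa [min_eq_right ht.2, max_eq_right ht.1] at this
      exact le_of_tendsto_of_tendsto' (key p.1 hp1 _ hu1 h1) (key t ⟨le_trans hp1.1 ht.1,
        le_trans ht.2 hp2.2⟩ v hvab hvt) (fun n => (hu n).2.2.2 _ (hvmem n))
  have hKcompact : IsCompact K :=
    ((isCompact_Icc.prod isCompact_Icc)).of_isClosed_subset hKclosed (fun p hp => hp.1)
  have himg : {l' : ℝ | ∃ c d : ℝ, a ≤ c ∧ c ≤ d ∧ d ≤ b ∧ IsExcursion E c d ∧ d - c = l'}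
      = (fun p : ℝ × ℝ => p.2 - p.1) '' K := by
    ext l'
    constructor
    · rintro ⟨c, d, hac, hcd, hdb, ⟨-, -, hEcd, hmin'⟩, rfl⟩
      exact ⟨(c, d), ⟨⟨⟨hac, le_trans hcd hdb⟩, ⟨le_trans hac hcd, hdb⟩⟩, hcd, hEcd, hmin'⟩, rfl⟩
    · rintro ⟨⟨c, d⟩, ⟨⟨hc, hd⟩, hcd, hEcd, hmin'⟩, rfl⟩
      exact ⟨c, d, hc.1, hcd, hd.2,
        ⟨hcd, hcont.mono (Set.Icc_subset_Icc hc.1 hd.2), hEcd, hmin'⟩, rfl⟩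
  rw [himg]
  exact (hKcompact.image (continuous_snd.sub continuous_fst)).isClosed
end

section
/- Let E : [a,b] → ℝ be an excursion of length l = b − a > 0. Then there exists a sub-excursion of E of length l' with l/2 ≤ l' < l. -/
open Set

section Crossing

variable {α δ : Type*} [ConditionallyCompleteLinearOrder α] [TopologicalSpace α] [OrderTopology α]
  [DenselyOrdered α] [LinearOrder δ] [TopologicalSpace δ] [OrderClosedTopology δ]
  {f : α → δ} {p q : α} {μ : δ}

theorem exists_last_eq_and_le_of_le (hpq : p ≤ q) (hf : ContinuousOn f (Icc p q))
    (hp : f p ≤ μ) (hq : μ ≤ f q) :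
    ∃ c ∈ Icc p q, f c = μ ∧ ∀ t ∈ Icc c q, μ ≤ f t := by
  set S := Icc p q ∩ f ⁻¹' Iic μ
  have hS : IsCompact S := isCompact_Icc.of_isClosed_subset
    (hf.preimage_isClosed_of_isClosed isClosed_Icc isClosed_Iic) inter_subset_left
  have hc : sSup S ∈ S := hS.sSup_mem ⟨p, ⟨le_rfl, hpq⟩, hp⟩
  set c := sSup S
  have eq_of_le : ∀ t ∈ Icc c q, f t ≤ μ → t = c := fun t ht hft =>
    (le_csSup hS.bddAbove ⟨⟨hc.1.1.trans ht.1, ht.2⟩, hft⟩).antisymm ht.1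
  obtain ⟨s, hs, hfs⟩ :=
    intermediate_value_Icc hc.1.2 (hf.mono (Icc_subset_Icc hc.1.1 le_rfl)) ⟨hc.2, hq⟩
  have hfc : f c = μ := eq_of_le s hs hfs.le ▸ hfs
  refine ⟨c, hc.1, hfc, fun t ht => le_of_not_gt fun hlt => ?_⟩
  rw [eq_of_le t ht hlt.le, hfc] at hlt
  exact lt_irrefl μ hlt

theorem exists_first_eq_and_le_of_le (hpq : p ≤ q) (hf : ContinuousOn f (Icc p q))
    (hp : μ ≤ f p) (hq : f q ≤ μ) :
    ∃ d ∈ Icc p q, f d = μ ∧ ∀ t ∈ Icc p d, μ ≤ f t := by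
  obtain ⟨d, hd, hfd, hle⟩ := exists_last_eq_and_le_of_le (α := αᵒᵈ) (f := f)
    (p := OrderDual.toDual q) (q := OrderDual.toDual p) hpq (by rwa [Icc_toDual]) hq hp
  exact ⟨d, ⟨hd.2, hd.1⟩, hfd, fun t ht => hle t ⟨ht.2, ht.1⟩⟩

end Crossing

namespace IsExcursion

variable {E : ℝ → ℝ} {a b : ℝ}

theorem of_subinterval (h : IsExcursion E a b) {c d : ℝ} (hac : a ≤ c) (hcd : c ≤ d)
    (hdb : d ≤ b) (heq : E c = E d) (hle : ∀ t ∈ Icc c d, E c ≤ E t) : IsExcursion E c d :=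
  ⟨hcd, h.2.1.mono (Icc_subset_Icc hac hdb), heq, hle⟩

theorem left_of_eq (h : IsExcursion E a b) {t : ℝ} (ht : t ∈ Icc a b) (hEt : E t = E a) :
    IsExcursion E a t :=
  h.of_subinterval le_rfl ht.1 ht.2 hEt.symm fun s hs => h.2.2.2 s ⟨hs.1, hs.2.trans ht.2⟩

theorem right_of_eq (h : IsExcursion E a b) {t : ℝ} (ht : t ∈ Icc a b) (hEt : E t = E a) :
    IsExcursion E t b :=
  h.of_subinterval ht.1 ht.2 le_rfl (hEt.trans h.2.2.1) fun s hs =>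
    hEt ▸ h.2.2.2 s ⟨ht.1.trans hs.1, hs.2⟩

theorem exists_sub_of_le_on (h : IsExcursion E a b) {p q μ : ℝ} (hap : a ≤ p) (hpq : p ≤ q)
    (hqb : q ≤ b) (hμ : E a ≤ μ) (hle : ∀ t ∈ Icc p q, μ ≤ E t) :
    ∃ c ∈ Icc a p, ∃ d ∈ Icc q b, E c = μ ∧ IsExcursion E c d := by
  obtain ⟨c, hc, hEc, hle_c⟩ := exists_last_eq_and_le_of_le hap
    (h.2.1.mono (Icc_subset_Icc le_rfl (hpq.trans hqb))) hμ (hle p ⟨le_rfl, hpq⟩)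
  obtain ⟨d, hd, hEd, hle_d⟩ := exists_first_eq_and_le_of_le hqb
    (h.2.1.mono (Icc_subset_Icc (hap.trans hpq) le_rfl)) (hle q ⟨hpq, le_rfl⟩) (h.2.2.1 ▸ hμ)
  refine ⟨c, hc, d, hd, hEc, h.of_subinterval hc.1 (hc.2.trans (hpq.trans hd.1)) hd.2
    (hEc.trans hEd.symm) fun t ht => hEc ▸ ?_⟩
  rcases le_total t p with htp | hpt
  · exact hle_c t ⟨ht.1, htp⟩
  rcases le_total t q with htq | hqt
  · exact hle t ⟨hpt, htq⟩
  · exact hle_d t ⟨hqt, ht.2⟩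

end IsExcursion

/-- An excursion of length `l = b − a > 0` has a sub-excursion of length `l'` with
`l/2 ≤ l' < l`. -/
theorem stmt_13 (E : ℝ → ℝ) (a b : ℝ) (hE : IsExcursion E a b) (hab : a < b) :
    ∃ c d : ℝ, a ≤ c ∧ c ≤ d ∧ d ≤ b ∧ IsExcursion E c d ∧
      (b - a) / 2 ≤ d - c ∧ d - c < b - a := by
  have hJ : Icc (a + (b - a) / 4) (b - (b - a) / 4) ⊆ Icc a b :=
    Icc_subset_Icc (by linarith) (by linarith)
  obtain ⟨t₀, ht₀, hmin₀⟩ := isCompact_Icc.exists_isMinOn (nonempty_Icc.2 (by linarith))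
    (hE.2.1.mono hJ)
  rcases (hE.2.2.2 t₀ (hJ ht₀)).eq_or_lt with hEt₀ | hlt
  · rcases le_total ((a + b) / 2) t₀ with hmid | hmid
    · exact ⟨a, t₀, le_rfl, (hJ ht₀).1, (hJ ht₀).2, hE.left_of_eq (hJ ht₀) hEt₀.symm,
        by linarith, by linarith [ht₀.2]⟩
    · exact ⟨t₀, b, (hJ ht₀).1, (hJ ht₀).2, le_rfl, hE.right_of_eq (hJ ht₀) hEt₀.symm,
        by linarith, by linarith [ht₀.1]⟩
  · obtain ⟨c, hc, d, hd, hEc, hcd⟩ := hE.exists_sub_of_le_on (by linarith) (by linarith)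
      (by linarith) hlt.le (isMinOn_iff.1 hmin₀)
    have hac : a < c := hc.1.lt_of_ne (by rintro rfl; exact hlt.ne hEc)
    exact ⟨c, d, hc.1, hcd.1, hd.2, hcd, by linarith [hc.2, hd.1], by linarith [hd.2]⟩
end

section
/- Let E : [a,b] → ℝ be an excursion of length l = b − a > 0, and T_E the set of lengths of sub-excursions of E. Then for every real number α with 0 ≤ α ≤ l, the intersection T_E ∩ [α, 2α] is nonempty. -/
open Set

private lemma clamp_mem {c d : ℝ} (h : c ≤ d) (u : ℝ) : min (max u c) d ∈ Icc c d :=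
  ⟨le_min (le_max_right u c) h, min_le_right _ _⟩

private lemma clamp_eq {c d u : ℝ} (h : u ∈ Icc c d) : min (max u c) d = u := by
  rw [max_eq_left h.1, min_eq_left h.2]

private lemma keyA (F : ℝ → ℝ) (hF : Continuous F) (a b α : ℝ) (hab : a ≤ b)
    (hFab : F a = F b) (hminF : ∀ t ∈ Icc a b, F a ≤ F t)
    (hα : 0 < α) (hαl : α ≤ b - a) :
    ∃ c d : ℝ, a ≤ c ∧ c ≤ d ∧ d ≤ b ∧ F c = F d ∧ (∀ u ∈ Icc c d, F c ≤ F u) ∧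
      α ≤ d - c ∧ d - c ≤ 2 * α := by
  set K : Set (ℝ × ℝ) := {p | a ≤ p.1 ∧ p.2 ≤ b ∧ p.1 ≤ p.2 ∧ α ≤ p.2 - p.1 ∧
    F p.1 = F p.2 ∧ ∀ u : ℝ, F p.1 ≤ F (min (max u p.1) p.2)} with hKdef
  have hKicc : ∀ p ∈ K, ∀ u ∈ Icc p.1 p.2, F p.1 ≤ F u := by
    intro p hp u hu
    have h := hp.2.2.2.2.2 u
    rwa [clamp_eq hu] at h
  have hclosed : IsClosed K := by
    have : K = {p : ℝ × ℝ | a ≤ p.1} ∩ ({p | p.2 ≤ b} ∩ ({p | p.1 ≤ p.2} ∩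
        ({p | α ≤ p.2 - p.1} ∩ ({p | F p.1 = F p.2} ∩
        ⋂ u : ℝ, {p | F p.1 ≤ F (min (max u p.1) p.2)})))) := by
      ext p
      simp only [hKdef, mem_setOf_eq, mem_inter_iff, mem_iInter]
    rw [this]
    refine (isClosed_le continuous_const continuous_fst).inter
      ((isClosed_le continuous_snd continuous_const).inter
      ((isClosed_le continuous_fst continuous_snd).inter
      ((isClosed_le continuous_const (continuous_snd.sub continuous_fst)).inter
      ((isClosed_eq (hF.comp continuous_fst) (hF.comp continuous_snd)).inter
      (isClosed_iInter fun u => isClosed_le (hF.comp continuous_fst)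
        (hF.comp ((continuous_const.max continuous_fst).min continuous_snd)))))))
  have hcomp : IsCompact K := by
    refine ((isCompact_Icc : IsCompact (Icc a b)).prod
      (isCompact_Icc : IsCompact (Icc a b))).of_isClosed_subset hclosed ?_
    rintro ⟨x, y⟩ ⟨h1, h2, h3, -⟩
    exact ⟨⟨h1, h3.trans h2⟩, ⟨h1.trans h3, h2⟩⟩
  have hne : K.Nonempty := by
    refine ⟨(a, b), le_refl a, le_refl b, hab, by linarith, hFab,
      fun u => hminF _ (clamp_mem hab u)⟩
  obtain ⟨⟨c, d⟩, hpK, hpmin⟩ :=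
    hcomp.exists_isMinOn hne ((continuous_snd.sub continuous_fst).continuousOn)
  obtain ⟨hac, hdb, hcd, hαcd, hFcd, hclamp⟩ := hpK
  simp only at hac hdb hcd hαcd hFcd hclamp ⊢
  by_cases hL : d - c ≤ 2 * α
  · exact ⟨c, d, hac, hcd, hdb, hFcd, hKicc (c, d) ⟨hac, hdb, hcd, hαcd, hFcd, hclamp⟩,
      hαcd, hL⟩
  push_neg at hL
  have hc2d : c + 2 * α < d := by linarith
  obtain ⟨t, ht, htmin⟩ := isCompact_Icc.exists_isMinOn
    (nonempty_Icc.mpr (by linarith : c + α ≤ c + 2 * α)) hF.continuousOn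
  set m := F t with hmdef
  have hm_le : ∀ u ∈ Icc (c + α) (c + 2 * α), m ≤ F u := fun u hu => htmin hu
  have htc : c ≤ t := le_trans (by linarith) ht.1
  have htd : t ≤ d := le_trans ht.2 (by linarith)
  have hKmem : (c, d) ∈ K := ⟨hac, hdb, hcd, hαcd, hFcd, hclamp⟩
  have hcm : F c ≤ m := hKicc (c, d) hKmem t ⟨htc, htd⟩
  rcases eq_or_lt_of_le hcm with heq | hlt
  · refine ⟨c, t, hac, htc, htd.trans hdb, heq, ?_, by linarith [ht.1], by linarith [ht.2]⟩
    intro u hu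
    exact hKicc (c, d) hKmem u ⟨hu.1, hu.2.trans htd⟩
  · exfalso
    -- left endpoint
    set S : Set ℝ := {u | u ∈ Icc c t ∧ F u < m} with hSdef
    have hcS : c ∈ S := ⟨⟨le_refl c, htc⟩, hlt⟩
    have hSbdd : BddAbove S := ⟨t, fun u hu => hu.1.2⟩
    set c₁ := sSup S with hc₁def
    have h1 : c ≤ c₁ := le_csSup hSbdd hcS
    have h2 : c₁ ≤ t := csSup_le ⟨c, hcS⟩ (fun u hu => hu.1.2)
    have h3 : c₁ ≤ c + α := by
      refine csSup_le ⟨c, hcS⟩ (fun u hu => ?_)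
      by_contra hcon
      push_neg at hcon
      have hmem : u ∈ Icc (c + α) (c + 2 * α) := ⟨hcon.le, hu.1.2.trans ht.2⟩
      exact absurd hu.2 (not_lt.mpr (hm_le u hmem))
    have hkey : ∀ u, c₁ < u → u ≤ t → m ≤ F u := by
      intro u hu1 hu2
      by_contra hcon
      push_neg at hcon
      have : u ∈ S := ⟨⟨h1.trans hu1.le, hu2⟩, hcon⟩
      exact absurd (le_csSup hSbdd this) (not_le.mpr hu1)
    have hFc₁_le : F c₁ ≤ m := by
      have hcl : c₁ ∈ closure S := csSup_mem_closure ⟨c, hcS⟩ hSbdd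
      have hsub : closure S ⊆ {u | F u ≤ m} :=
        closure_minimal (fun u hu => hu.2.le) (isClosed_le hF continuous_const)
      exact hsub hcl
    have hFc₁ : F c₁ = m := by
      refine le_antisymm hFc₁_le ?_
      rcases eq_or_lt_of_le h2 with he | hl
      · rw [he]
      · have hcl : c₁ ∈ closure (Ioc c₁ t) := by
          rw [closure_Ioc hl.ne]
          exact ⟨le_refl _, hl.le⟩
        have hsub : closure (Ioc c₁ t) ⊆ {u | m ≤ F u} :=
          closure_minimal (fun u hu => hkey u hu.1 hu.2) (isClosed_le continuous_const hF)
        exact hsub hcl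
    -- right endpoint
    set T : Set ℝ := {u | u ∈ Icc t d ∧ F u < m} with hTdef
    have hdT : d ∈ T := ⟨⟨htd, le_refl d⟩, by rw [← hFcd]; exact hlt⟩
    have hTbdd : BddBelow T := ⟨t, fun u hu => hu.1.1⟩
    set d₁ := sInf T with hd₁def
    have h4 : t ≤ d₁ := le_csInf ⟨d, hdT⟩ (fun u hu => hu.1.1)
    have h5 : d₁ ≤ d := csInf_le hTbdd hdT
    have h6 : c + 2 * α ≤ d₁ := by
      refine le_csInf ⟨d, hdT⟩ (fun u hu => ?_)
      by_contra hcon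
      push_neg at hcon
      have hmem : u ∈ Icc (c + α) (c + 2 * α) := ⟨le_trans ht.1 hu.1.1, hcon.le⟩
      exact absurd hu.2 (not_lt.mpr (hm_le u hmem))
    have hkey2 : ∀ u, t ≤ u → u < d₁ → m ≤ F u := by
      intro u hu1 hu2
      by_contra hcon
      push_neg at hcon
      have : u ∈ T := ⟨⟨hu1, hu2.le.trans h5⟩, hcon⟩
      exact absurd (csInf_le hTbdd this) (not_le.mpr hu2)
    have hFd₁_le : F d₁ ≤ m := by
      have hcl : d₁ ∈ closure T := csInf_mem_closure ⟨d, hdT⟩ hTbdd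
      have hsub : closure T ⊆ {u | F u ≤ m} :=
        closure_minimal (fun u hu => hu.2.le) (isClosed_le hF continuous_const)
      exact hsub hcl
    have hFd₁ : F d₁ = m := by
      refine le_antisymm hFd₁_le ?_
      rcases eq_or_lt_of_le h4 with he | hl
      · rw [← he]
      · have hcl : d₁ ∈ closure (Ico t d₁) := by
          rw [closure_Ico hl.ne]
          exact ⟨hl.le, le_refl _⟩
        have hsub : closure (Ico t d₁) ⊆ {u | m ≤ F u} :=
          closure_minimal (fun u hu => hkey2 u hu.1 hu.2) (isClosed_le continuous_const hF)
        exact hsub hcl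
    -- interior bound
    have hmid : ∀ u ∈ Icc c₁ d₁, m ≤ F u := by
      intro u hu
      rcases le_or_gt u t with h | h
      · rcases eq_or_lt_of_le hu.1 with he | hl
        · rw [← he, hFc₁]
        · exact hkey u hl h
      · rcases eq_or_lt_of_le hu.2 with he | hl
        · rw [he, hFd₁]
        · exact hkey2 u h.le hl
    -- membership of (c₁, d₁) in K
    have hc₁d₁ : c₁ ≤ d₁ := h2.trans h4
    have hq : (c₁, d₁) ∈ K := by
      refine ⟨hac.trans h1, h5.trans hdb, hc₁d₁, by linarith, by rw [hFc₁, hFd₁], fun u => ?_⟩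
      have hmem := clamp_mem hc₁d₁ u
      calc F c₁ = m := hFc₁
        _ ≤ F (min (max u c₁) d₁) := hmid _ hmem
    -- contradiction with minimality
    have hd₁d : d₁ < d := by
      rcases eq_or_lt_of_le h5 with he | hl
      · exfalso
        rw [he] at hFd₁
        rw [← hFcd] at hFd₁
        exact absurd hFd₁ (ne_of_lt hlt)
      · exact hl
    have hmin' : d - c ≤ d₁ - c₁ := hpmin hq
    linarith

/-- For an excursion of length `l = b − a > 0` and any `0 ≤ α ≤ l`, there is a
sub-excursion whose length lies in `[α, 2α]`. -/
theorem stmt_14 (E : ℝ → ℝ) (a b : ℝ) (hE : IsExcursion E a b) (hab : a < b)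
    (α : ℝ) (hα : 0 ≤ α) (hαl : α ≤ b - a) :
    ∃ c d : ℝ, a ≤ c ∧ c ≤ d ∧ d ≤ b ∧ IsExcursion E c d ∧
      α ≤ d - c ∧ d - c ≤ 2 * α := by
  obtain ⟨hab', hcont, heq, hmin⟩ := hE
  rcases eq_or_lt_of_le hα with h0 | h0
  · refine ⟨a, a, le_refl a, le_refl a, hab.le,
      ⟨le_refl a, hcont.mono (Icc_subset_Icc_right hab.le), rfl, ?_⟩, by linarith, by linarith⟩
    intro t ht
    rw [le_antisymm ht.2 ht.1]
  · set F : ℝ → ℝ := fun x => E (min (max x a) b) with hFdef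
    have hFcont : Continuous F := hcont.comp_continuous
      ((continuous_id.max continuous_const).min continuous_const)
      (fun x => clamp_mem hab.le x)
    have hFE : ∀ x ∈ Icc a b, F x = E x := by
      intro x hx
      simp only [hFdef]
      rw [clamp_eq hx]
    obtain ⟨c, d, hac, hcd, hdb, hFcd, hFmin, hl1, hl2⟩ := keyA F hFcont a b α hab.le
      (by rw [hFE a ⟨le_refl a, hab.le⟩, hFE b ⟨hab.le, le_refl b⟩]; exact heq)
      (fun t ht => by rw [hFE a ⟨le_refl a, hab.le⟩, hFE t ht]; exact hmin t ht)
      h0 hαl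
    have hcab : c ∈ Icc a b := ⟨hac, hcd.trans hdb⟩
    have hdab : d ∈ Icc a b := ⟨hac.trans hcd, hdb⟩
    refine ⟨c, d, hac, hcd, hdb,
      ⟨hcd, hcont.mono (Icc_subset_Icc hac hdb), ?_, ?_⟩, hl1, hl2⟩
    · rw [← hFE c hcab, ← hFE d hdab]; exact hFcd
    · intro u hu
      have huab : u ∈ Icc a b := ⟨hac.trans hu.1, hu.2.trans hdb⟩
      rw [← hFE c hcab, ← hFE u huab]
      exact hFmin u hu
end

section
/- Let γ be a primitive element of the free group F₂ = ⟨a,b⟩ whose slope has continued fraction expansion [n₁,...,n_r], and let w_i(γ), w_i'(γ) be the standard building blocks with lengths l_i(γ), l_i'(γ). Fix α > 4 and 1 ≤ i ≤ r, and let u be any subword of γ (or of a cyclic permutation of γ) with |u| ≥ α·l_i(γ). Then, writing a cyclic permutation of γ as a word on an alphabet consisting of a cyclic permutation of w_i(γ) and an adapted cyclic permutation of w_i'(γ), the word u contains at least (α − 4)/2 full occurrences of letters from this alphabet. -/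
/-!
Cut `u` at the block boundaries of the concatenation it sits in: unless `u` lies inside a
single block, it is a suffix of a block, then `k` full blocks, then a prefix of a block.
Every block has length at most `2 l_i`, so `α l_i ≤ |u| ≤ (k + 2) · 2 l_i`, i.e.
`k ≥ (α - 4) / 2`; and `α > 4` makes `u` too long to lie inside one block.
-/

namespace List

variable {α : Type*}

theorem length_flatten_le_mul {L : List (List α)} {m : ℕ} (hL : ∀ b ∈ L, b.length ≤ m) :
    L.flatten.length ≤ L.length * m := by
  rw [length_flatten, ← smul_eq_mul, ← length_map (f := length)]
  exact sum_le_card_nsmul _ _ (by simpa using hL)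

theorem IsPrefix.exists_eq_flatten_append {L : List (List α)} {u : List α}
    (h : u <+: L.flatten) :
    ∃ C s, C ⊆ L ∧ u = C.flatten ++ s ∧ (s = [] ∨ ∃ b ∈ L, s <+: b) := by
  induction L generalizing u with
  | nil => exact ⟨[], [], nil_subset _, by simpa using h, Or.inl rfl⟩
  | cons b T ih =>
    obtain ⟨t, ht⟩ := h
    rcases append_eq_append_iff.mp (ht.trans flatten_cons) with ⟨r, hb, -⟩ | ⟨r, rfl, hT⟩
    · exact ⟨[], u, nil_subset _, by simp, Or.inr ⟨b, mem_cons_self, r, hb.symm⟩⟩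
    · obtain ⟨C, s, hC, rfl, hs⟩ := ih ⟨t, hT.symm⟩
      refine ⟨b :: C, s, cons_subset_cons b hC, by simp, ?_⟩
      exact hs.imp_right exists_mem_cons_of_exists

theorem IsInfix.exists_eq_append_flatten_append {L : List (List α)} {u : List α}
    (h : u <:+: L.flatten) :
    (∃ b ∈ L, u <:+: b) ∨
      ∃ p C s, C ⊆ L ∧ u = p ++ C.flatten ++ s ∧
        (p = [] ∨ ∃ b ∈ L, p <:+ b) ∧ (s = [] ∨ ∃ b ∈ L, s <+: b) := by
  induction L generalizing u with
  | nil => exact Or.inr ⟨[], [], [], nil_subset _, by simpa using h, Or.inl rfl, Or.inl rfl⟩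
  | cons b T ih =>
    rw [flatten_cons, infix_append_iff] at h
    rcases h with hb | hT | ⟨p, v, rfl, hp, hv⟩
    · exact Or.inl ⟨b, mem_cons_self, hb⟩
    · refine (ih hT).imp exists_mem_cons_of_exists ?_
      rintro ⟨p, C, s, hC, rfl, hp, hs⟩
      exact ⟨p, C, s, Subset.trans hC (subset_cons_self b T), rfl,
        hp.imp_right exists_mem_cons_of_exists,
        hs.imp_right exists_mem_cons_of_exists⟩
    · obtain ⟨C, s, hC, rfl, hs⟩ := hv.exists_eq_flatten_append
      exact Or.inr ⟨p, C, s, Subset.trans hC (subset_cons_self b T), by simp,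
        Or.inr ⟨b, mem_cons_self, hp⟩,
        hs.imp_right exists_mem_cons_of_exists⟩

theorem IsInfix.exists_eq_append_flatten_append_of_lt_length {L : List (List α)} {u : List α}
    {m : ℕ} (hL : ∀ b ∈ L, b.length ≤ m) (h : u <:+: L.flatten) (hm : m < u.length) :
    ∃ p C s, C ⊆ L ∧ u = p ++ C.flatten ++ s ∧
      (p = [] ∨ ∃ b ∈ L, p <:+ b) ∧ (s = [] ∨ ∃ b ∈ L, s <+: b) ∧
      u.length ≤ (C.length + 2) * m := by
  rcases h.exists_eq_append_flatten_append with ⟨b, hb, hub⟩ | ⟨p, C, s, hC, rfl, hp, hs⟩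
  · exact absurd (hub.length_le.trans (hL b hb)) hm.not_ge
  have hp_le : p.length ≤ m := by
    rcases hp with rfl | ⟨b, hb, hpb⟩
    · exact Nat.zero_le m
    · exact hpb.length_le.trans (hL b hb)
  have hs_le : s.length ≤ m := by
    rcases hs with rfl | ⟨b, hb, hsb⟩
    · exact Nat.zero_le m
    · exact hsb.length_le.trans (hL b hb)
  have hC_le := length_flatten_le_mul fun c hc => hL c (hC hc)
  refine ⟨p, C, s, hC, rfl, hp, hs, ?_⟩
  simp only [length_append]
  nlinarith

end List

theorem stmt_19_general {S : Type*} (W W' : List S) (hW : 0 < W.length)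
    (hle2 : W'.length ≤ 2 * W.length)
    (α : ℝ) (hα : 4 < α)
    (B : List (List S)) (hB : ∀ b ∈ B, b = W ∨ b = W')
    (u : List S) (hu : u <:+: B.flatten) (hlen : α * (W.length : ℝ) ≤ (u.length : ℝ)) :
    ∃ (p s : List S) (Cc : List (List S)),
      (∀ b ∈ Cc, b = W ∨ b = W') ∧
      u = p ++ Cc.flatten ++ s ∧
      (p <:+ W ∨ p <:+ W') ∧ (s <+: W ∨ s <+: W') ∧
      (α - 4) / 2 ≤ (Cc.length : ℝ) := by
  have hblock : ∀ b ∈ B, b.length ≤ 2 * W.length := fun b hb => by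
    rcases hB b hb with rfl | rfl <;> omega
  have hWpos : (0 : ℝ) < W.length := by exact_mod_cast hW
  have hlong : 2 * W.length < u.length := by
    exact_mod_cast (by nlinarith : (2 * W.length : ℝ) < u.length)
  obtain ⟨p, C, s, hC, rfl, hp, hs, hcount⟩ :=
    hu.exists_eq_append_flatten_append_of_lt_length hblock hlong
  refine ⟨p, s, C, fun c hc => hB c (hC hc), rfl, ?_, ?_, ?_⟩
  · rcases hp with rfl | ⟨b, hb, hpb⟩
    · exact Or.inl List.nil_suffix
    · rcases hB b hb with rfl | rfl
      exacts [Or.inl hpb, Or.inr hpb]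
  · rcases hs with rfl | ⟨b, hb, hsb⟩
    · exact Or.inl List.nil_prefix
    · rcases hB b hb with rfl | rfl
      exacts [Or.inl hsb, Or.inr hsb]
  · have hcount' : ((p ++ C.flatten ++ s).length : ℝ) ≤ (C.length + 2) * (2 * W.length) := by
      exact_mod_cast hcount
    rw [div_le_iff₀ two_pos]
    nlinarith

/-- Lemma on block decompositions: if `W, W'` are the (adapted cyclic permutations of the)
blocks `w_i(γ)`, `w_i'(γ)`, with `l_i = |W| ≤ |W'| ≤ 2|W|`, a cyclic permutation of the
primitive word `γ` is a concatenation `B` of blocks from `{W, W'}`, and `u` is a subword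
of it with `|u| ≥ α·l_i` (`α > 4`), then `u` decomposes as a suffix of a block, at least
`(α − 4)/2` full blocks from `{W, W'}`, and a prefix of a block. -/
theorem stmt_19 {S : Type*} (W W' : List S) (hW : 0 < W.length)
    (hle : W.length ≤ W'.length) (hle2 : W'.length ≤ 2 * W.length)
    (α : ℝ) (hα : 4 < α)
    (B : List (List S)) (hB : ∀ b ∈ B, b = W ∨ b = W')
    (u : List S) (hu : u <:+: B.flatten) (hlen : α * (W.length : ℝ) ≤ (u.length : ℝ)) :
    ∃ (p s : List S) (Cc : List (List S)),
      (∀ b ∈ Cc, b = W ∨ b = W') ∧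
      u = p ++ Cc.flatten ++ s ∧
      (p <:+ W ∨ p <:+ W') ∧ (s <+: W ∨ s <+: W') ∧
      (α - 4) / 2 ≤ (Cc.length : ℝ) :=
  stmt_19_general W W' hW hle2 α hα B hB u hu hlen
end
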